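/- arXiv:2208.11325 — 4 statements merged into one kernel-verified Lean document; each statement's English description precedes it below -/
import Mathlib

section
/- Let G = (V⁺, V⁻; E) be a simple bipartite graph with edge weights w : E → ℝ, let μ be a minimum-weight perfect matching in (G, w), and let p be a potential for the auxiliary weighted graph (G_μ, w_μ). Let s ∈ V⁺ be a vertex with δ_G(s) = {s} × V⁻, and let w̃ : E → ℝ be new weights satisfying w̃(e) = w(e) for every edge e ∈ E ∖ δ_G(s). Let e' = (s, t) be the edge of μ incident to s and let μ' = μ ∖ {e'}. Define p' : V → ℝ by p'(s) = −min{ w̃(e) − p(v) : e = (s, v) ∈ δ_G(s) } and p'(v) = p(v) for every v ∈ V ∖ {s}. Then p' is a potential for (G_{μ'}, w̃_{μ'}), i.e., w̃_{μ'}(e) + p'(u) − p'(v) ≥ 0 for every edge e = (u, v) ∈ E_{μ'}. -/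
/-!  Common setup: weighted bipartite graphs `G = (V⁺, V⁻; E)` with `V⁺ = α`, `V⁻ = β`,
edges directed from `V⁺` to `V⁻`, auxiliary graphs of matchings, walks and cycles. -/

variable {α β : Type*}

/-- Directed adjacency of the auxiliary graph `G_μ`: non-matching edges go from `V⁺` to `V⁻`,
matching edges are reversed. -/
def auxAdj (E μ : Finset (α × β)) : α ⊕ β → α ⊕ β → Prop
  | Sum.inl u, Sum.inr v => (u, v) ∈ E ∧ (u, v) ∉ μ
  | Sum.inr v, Sum.inl u => (u, v) ∈ μ
  | _, _ => False

/-- The auxiliary weight `w_μ`, as a function on pairs of vertices. -/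
def auxW (w : α × β → ℝ) : α ⊕ β → α ⊕ β → ℝ
  | Sum.inl u, Sum.inr v => w (u, v)
  | Sum.inr v, Sum.inl u => - w (u, v)
  | _, _ => 0

/-- Weight of a walk, given by its list of vertices. -/
def walkWeight {V : Type*} (W : V → V → ℝ) (l : List V) : ℝ :=
  ((l.zip l.tail).map fun p => W p.1 p.2).sum

/-- A (simple) directed path from `s` to `t`, given by its list of vertices. -/
def IsDiPath {V : Type*} (adj : V → V → Prop) (s t : V) (l : List V) : Prop :=
  l.head? = some s ∧ l.getLast? = some t ∧ l.Chain' adj ∧ l.Nodup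

/-- A (simple) directed cycle, given by the list of its vertices (the closing edge
from the last vertex back to the first is implicit). -/
def IsDiCycle {V : Type*} (adj : V → V → Prop) (l : List V) : Prop :=
  l ≠ [] ∧ l.Nodup ∧ (l ++ l.take 1).Chain' adj

/-- Total auxiliary weight of a directed cycle (including the closing edge). -/
def cycleWeight {V : Type*} (W : V → V → ℝ) (l : List V) : ℝ :=
  walkWeight W (l ++ l.take 1)

/-- The underlying undirected edge of a dart of the auxiliary graph. -/
def undEdge : (α ⊕ β) × (α ⊕ β) → Option (α × β)
  | (Sum.inl u, Sum.inr v) => some (u, v)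
  | (Sum.inr v, Sum.inl u) => some (u, v)
  | _ => none

/-- The set of underlying edges of `G` used by a walk in the auxiliary graph. -/
def usedEdges [DecidableEq α] [DecidableEq β] (l : List (α ⊕ β)) : Finset (α × β) :=
  ((l.zip l.tail).filterMap undEdge).toFinset

/-- An edge set is a matching if every vertex appears at most once. -/
def IsMatching (μ : Finset (α × β)) : Prop :=
  ∀ e ∈ μ, ∀ f ∈ μ, (e.1 = f.1 ∨ e.2 = f.2) → e = f

/-- A perfect matching: a matching contained in `E` covering every vertex. -/
def IsPerfectMatching (E μ : Finset (α × β)) : Prop :=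
  μ ⊆ E ∧ IsMatching μ ∧ (∀ u : α, ∃ v : β, (u, v) ∈ μ) ∧ (∀ v : β, ∃ u : α, (u, v) ∈ μ)

/-- The weight of a matching. -/
def matchingWeight (w : α × β → ℝ) (μ : Finset (α × β)) : ℝ := ∑ e ∈ μ, w e

/-- A minimum-weight perfect matching. -/
def IsMinPerfectMatching (E : Finset (α × β)) (w : α × β → ℝ) (μ : Finset (α × β)) : Prop :=
  IsPerfectMatching E μ ∧
    ∀ ν : Finset (α × β), IsPerfectMatching E ν → matchingWeight w μ ≤ matchingWeight w ν

/-- `p` is a potential for `(G_μ, w_μ)`: all reduced weights are nonnegative. -/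
def IsPotential (E μ : Finset (α × β)) (w : α × β → ℝ) (p : α ⊕ β → ℝ) : Prop :=
  ∀ x y : α ⊕ β, auxAdj E μ x y → auxW w x y + p x - p y ≥ 0

/-- If `μ` is a minimum-weight perfect matching for `(G, w)`, `p` a potential
for `(G_μ, w_μ)`, `s ∈ V⁺` with `δ_G(s) = {s} × V⁻`, and `w̃` agrees with `w` off `δ_G(s)`,
then with `e' = (s, t) ∈ μ`, `μ' = μ \ {e'}` and `p'` obtained from `p` by only changing its
value at `s` to `−min { w̃(s,v) − p(v) : v ∈ V⁻ }`, `p'` is a potential for `(G_{μ'}, w̃_{μ'})`. -/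
theorem potential_after_weight_update_around_vertex
    [Fintype α] [Fintype β] [DecidableEq α] [DecidableEq β] [Nonempty β]
    (E μ : Finset (α × β)) (w tw : α × β → ℝ) (p p' : α ⊕ β → ℝ) (s : α) (t : β)
    (hμ : IsMinPerfectMatching E w μ)
    (hp : IsPotential E μ w p)
    (hs : ∀ v : β, (s, v) ∈ E)
    (htw : ∀ e ∈ E, e.1 ≠ s → tw e = w e)
    (het : (s, t) ∈ μ)
    (hp's : p' (Sum.inl s) =
      - Finset.univ.inf' Finset.univ_nonempty (fun v : β => tw (s, v) - p (Sum.inr v)))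
    (hp'v : ∀ x : α ⊕ β, x ≠ Sum.inl s → p' x = p x) :
    IsPotential E (μ.erase (s, t)) tw p' := by
  obtain ⟨⟨hμE, hmatch, _, _⟩, _⟩ := hμ
  intro x y hxy
  match x, y with
  | Sum.inl u, Sum.inr v =>
    obtain ⟨hE, hnμ'⟩ := hxy
    by_cases hu : u = s
    · subst hu
      rw [show auxW tw (Sum.inl u) (Sum.inr v) = tw (u, v) from rfl,
        hp's, hp'v (Sum.inr v) (by simp)]
      have := Finset.inf'_le (b := v) (fun v : β => tw (u, v) - p (Sum.inr v))
        (Finset.mem_univ v)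
      linarith
    · have hnμ : (u, v) ∉ μ := fun h =>
        hnμ' (Finset.mem_erase.mpr ⟨by simp [hu], h⟩)
      have h2 := hp (Sum.inl u) (Sum.inr v) ⟨hE, hnμ⟩
      rw [hp'v (Sum.inl u) (by simp [hu]), hp'v (Sum.inr v) (by simp)]
      have hw : tw (u, v) = w (u, v) := htw _ hE hu
      show tw (u, v) + p (Sum.inl u) - p (Sum.inr v) ≥ 0
      rw [hw]; exact h2
  | Sum.inr v, Sum.inl u =>
    have hmem : (u, v) ∈ μ := Finset.mem_of_mem_erase hxy
    have hu : u ≠ s := by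
      intro h; subst h
      have heq := hmatch _ hmem _ het (Or.inl rfl)
      have hxy' : (u, v) ∈ μ.erase (u, t) := hxy
      rw [heq] at hxy'
      exact (Finset.notMem_erase _ _) hxy' 
    have hE := hμE hmem
    have h2 := hp (Sum.inr v) (Sum.inl u) hmem
    rw [hp'v (Sum.inl u) (by simp [hu]), hp'v (Sum.inr v) (by simp)]
    have hw : tw (u, v) = w (u, v) := htw _ hE hu
    show - tw (u, v) + p (Sum.inr v) - p (Sum.inl u) ≥ 0
    rw [hw]; exact h2
  | Sum.inl _, Sum.inl _ => exact absurd hxy (by simp [auxAdj])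
  | Sum.inr _, Sum.inr _ => exact absurd hxy (by simp [auxAdj])
end

section
/- Let G = (V⁺, V⁻; E) be a simple bipartite graph with edge weights w : E → ℝ, let μ be a minimum-weight perfect matching in (G, w), let s ∈ V⁺ be a vertex with δ_G(s) = {s} × V⁻, and let w̃ : E → ℝ be new weights satisfying w̃(e) = w(e) for every edge e ∈ E ∖ δ_G(s). Let e' = (s, t) be the edge of μ incident to s, let μ' = μ ∖ {e'}, and let P_t be a shortest directed path from s to t in the auxiliary weighted graph (G_{μ'}, w̃_{μ'}). Then μ' △ P_t (the matching obtained from μ' by exchanging matching and non-matching edges along P_t) is a minimum-weight perfect matching in (G, w̃). -/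
/-!  Common setup: weighted bipartite graphs `G = (V⁺, V⁻; E)` with `V⁺ = α`, `V⁻ = β`,
edges directed from `V⁺` to `V⁻`, auxiliary graphs of matchings, walks and cycles. -/

variable {α β : Type*}

/-!
Removing `(s, t)` from `μ` leaves a perfect matching `μ'` of `G - s - t`, and exchanging along
any `s`–`t` path `P` of `G_{μ'}` gives a perfect matching of weight `w̃(μ') + w̃_{μ'}(P)`.

For optimality compare with an arbitrary perfect matching `ν`, and let `O` be the cycle through
`s` of the permutation `μ⁻¹ ∘ ν` of `V⁺`. Using `ν` on `O` and `μ` off `O` is again a perfect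
matching, so minimality of `μ` shows that `μ` is no heavier than `ν` off `O`, for `w` and hence
for `w̃`, which agrees with `w` away from `s`. On `O`, the alternating cycle
`s, ν s, μ⁻¹ ν s, …` without its closing edge `(s, t)` is an `s`–`t` path `Q` of `G_{μ'}` with
`w̃_{μ'}(Q) = w̃(ν|_O) - w̃(μ|_O) + w̃(s, t)`, and `w̃_{μ'}(P) ≤ w̃_{μ'}(Q)` finishes the proof.
-/

open Equiv Finset Function Sum

section Walks

variable {V : Type*}

lemma walkWeight_cons_cons (W : V → V → ℝ) (x y : V) (l : List V) :
    walkWeight W (x :: y :: l) = W x y + walkWeight W (y :: l) := by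
  simp [walkWeight]

lemma IsDiPath.mono {adj adj' : V → V → Prop} {s t : V} {l : List V} (h : IsDiPath adj s t l)
    (H : ∀ x ∈ l, ∀ y, adj x y → adj' x y) : IsDiPath adj' s t l :=
  ⟨h.1, h.2.1, h.2.2.1.imp_of_mem_imp fun x y hx _ => H x hx y, h.2.2.2⟩

lemma IsDiPath.of_cons_cons {adj : V → V → Prop} {s t x y : V} {l : List V}
    (h : IsDiPath adj s t (x :: y :: l)) : adj x y ∧ IsDiPath adj y t (y :: l) := by
  obtain ⟨-, hlast, hchain, hnodup⟩ := h
  rw [List.Chain', List.isChain_cons_cons] at hchain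
  exact ⟨hchain.1, rfl, by rwa [List.getLast?_cons_cons] at hlast, hchain.2,
    (List.nodup_cons.1 hnodup).2⟩

end Walks

section UsedEdges

variable [DecidableEq α] [DecidableEq β]

@[simp]
lemma usedEdges_singleton (x : α ⊕ β) : usedEdges [x] = ∅ := by
  simp [usedEdges]

lemma usedEdges_inl_inr_cons (a : α) (b : β) (l : List (α ⊕ β)) :
    usedEdges (inl a :: inr b :: l) = insert (a, b) (usedEdges (inr b :: l)) := by
  simp [usedEdges, undEdge]

lemma usedEdges_inr_inl_cons (a : α) (b : β) (l : List (α ⊕ β)) :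
    usedEdges (inr b :: inl a :: l) = insert (a, b) (usedEdges (inl a :: l)) := by
  simp [usedEdges, undEdge]

lemma mem_of_mem_usedEdges {l : List (α ⊕ β)} {e : α × β} (he : e ∈ usedEdges l) :
    inl e.1 ∈ l ∧ inr e.2 ∈ l := by
  simp only [usedEdges, List.mem_toFinset, List.mem_filterMap] at he
  obtain ⟨⟨x, y⟩, hxy, hund⟩ := he
  have hx : x ∈ l := (List.of_mem_zip hxy).1
  have hy : y ∈ l := List.mem_of_mem_tail (List.of_mem_zip hxy).2
  rcases x with a | b <;> rcases y with a' | b' <;> simp only [undEdge, reduceCtorEq,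
    Option.some.injEq] at hund <;> subst hund
  exacts [⟨hx, hy⟩, ⟨hy, hx⟩]

end UsedEdges

lemma Finset.symmDiff_insert_insert {γ : Type*} [DecidableEq γ] {a b : γ} {ρ U : Finset γ}
    (ha : a ∉ ρ) (hb : b ∈ ρ) (haU : a ∉ U) (hbU : b ∉ U) :
    symmDiff ρ (insert a (insert b U)) = symmDiff (insert a (ρ.erase b)) U := by
  ext e
  simp only [mem_symmDiff, mem_insert, mem_erase]
  grind

section Matchings

lemma IsMatching.mono {ρ μ : Finset (α × β)} (hμ : IsMatching μ) (h : ρ ⊆ μ) : IsMatching ρ :=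
  fun e he f hf => hμ e (h he) f (h hf)

variable [DecidableEq α] [DecidableEq β] {E ρ μ : Finset (α × β)} {s : α} {t : β}

lemma IsMatching.insert {a : α × β} (hρ : IsMatching ρ) (ha : ∀ f ∈ ρ, f.1 ≠ a.1 ∧ f.2 ≠ a.2) :
    IsMatching (insert a ρ) := by
  intro e he f hf hef
  rcases mem_insert.1 he with rfl | he' <;> rcases mem_insert.1 hf with rfl | hf'
  · rfl
  · have := ha f hf'; grind
  · have := ha e he'; grind
  · exact hρ e he' f hf' hef

lemma matchingWeight_insert_erase (w : α × β → ℝ) {a b : α × β} (ha : a ∉ ρ) (hb : b ∈ ρ) :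
    matchingWeight w (insert a (ρ.erase b)) = matchingWeight w ρ + w a - w b := by
  rw [matchingWeight, sum_insert (fun h => ha (mem_of_mem_erase h)), sum_erase_eq_sub hb,
    matchingWeight]
  ring

structure IsPerfectMatchingExcept (E ρ : Finset (α × β)) (s : α) (t : β) : Prop where
  subset : ρ ⊆ E
  isMatching : IsMatching ρ
  source_unmatched : ∀ b, (s, b) ∉ ρ
  target_unmatched : ∀ a, (a, t) ∉ ρ
  left_matched : ∀ a ≠ s, ∃ b, (a, b) ∈ ρ
  right_matched : ∀ b ≠ t, ∃ a, (a, b) ∈ ρ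

lemma IsPerfectMatching.isPerfectMatchingExcept_erase (hμ : IsPerfectMatching E μ)
    (hst : (s, t) ∈ μ) : IsPerfectMatchingExcept E (μ.erase (s, t)) s t := by
  obtain ⟨hsub, hmatch, hleft, hright⟩ := hμ
  refine ⟨(erase_subset _ _).trans hsub, hmatch.mono (erase_subset _ _), ?_, ?_, ?_, ?_⟩
  · intro b hb
    exact (mem_erase.1 hb).1 (hmatch _ (mem_erase.1 hb).2 _ hst (Or.inl rfl))
  · intro a ha
    exact (mem_erase.1 ha).1 (hmatch _ (mem_erase.1 ha).2 _ hst (Or.inr rfl))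
  · intro a ha
    obtain ⟨b, hb⟩ := hleft a
    exact ⟨b, mem_erase.2 ⟨by grind, hb⟩⟩
  · intro b hb
    obtain ⟨a, ha⟩ := hright b
    exact ⟨a, mem_erase.2 ⟨by grind, ha⟩⟩

lemma IsPerfectMatchingExcept.isPerfectMatching_insert (hρ : IsPerfectMatchingExcept E ρ s t)
    (hst : (s, t) ∈ E) : IsPerfectMatching E (insert (s, t) ρ) := by
  refine ⟨insert_subset hst hρ.subset, hρ.isMatching.insert fun ⟨a, b⟩ hab => ⟨?_, ?_⟩, ?_, ?_⟩
  · rintro (rfl : a = s); exact hρ.source_unmatched b hab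
  · rintro (rfl : b = t); exact hρ.target_unmatched a hab
  · intro a
    by_cases ha : a = s
    · exact ⟨t, by simp [ha]⟩
    · obtain ⟨b, hb⟩ := hρ.left_matched a ha; exact ⟨b, mem_insert_of_mem hb⟩
  · intro b
    by_cases hb : b = t
    · exact ⟨s, by simp [hb]⟩
    · obtain ⟨a, ha⟩ := hρ.right_matched b hb; exact ⟨a, mem_insert_of_mem ha⟩

end Matchings

section Exchange

variable [DecidableEq α] [DecidableEq β] {E ρ : Finset (α × β)} {s u : α} {t v : β}

lemma IsPerfectMatchingExcept.exchange (hρ : IsPerfectMatchingExcept E ρ s t)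
    (hsv : (s, v) ∈ E) (huv : (u, v) ∈ ρ) (hvt : v ≠ t) :
    IsPerfectMatchingExcept E (insert (s, v) (ρ.erase (u, v))) u t := by
  have hus : u ≠ s := by rintro rfl; exact hρ.source_unmatched v huv
  have eq_of_mem : ∀ {a b}, (a, b) ∈ ρ → (a = u ∨ b = v) → (a, b) = (u, v) :=
    fun hab h => hρ.isMatching _ hab _ huv h
  refine ⟨insert_subset hsv ((erase_subset _ _).trans hρ.subset),
    (hρ.isMatching.mono (erase_subset _ _)).insert fun ⟨a, b⟩ hab => ⟨?_, ?_⟩, ?_, ?_, ?_, ?_⟩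
  · rintro (rfl : a = s); exact hρ.source_unmatched b (mem_of_mem_erase hab)
  · rintro (rfl : b = v); exact ne_of_mem_erase hab (eq_of_mem (mem_of_mem_erase hab) (.inr rfl))
  · intro b hb
    rcases mem_insert.1 hb with h | h
    · exact hus (congrArg Prod.fst h)
    · exact ne_of_mem_erase h (eq_of_mem (mem_of_mem_erase h) (.inl rfl))
  · intro a ha
    rcases mem_insert.1 ha with h | h
    · exact hvt (congrArg Prod.snd h).symm
    · exact hρ.target_unmatched a (mem_of_mem_erase h)
  · intro a hau
    by_cases has : a = s
    · exact ⟨v, by simp [has]⟩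
    · obtain ⟨b, hb⟩ := hρ.left_matched a has
      exact ⟨b, mem_insert_of_mem (mem_erase.2 ⟨by grind, hb⟩)⟩
  · intro b hbt
    by_cases hbv : b = v
    · exact ⟨s, by simp [hbv]⟩
    · obtain ⟨a, ha⟩ := hρ.right_matched b hbt
      exact ⟨a, mem_insert_of_mem (mem_erase.2 ⟨by grind, ha⟩)⟩

lemma auxAdj_insert_erase {x y : α ⊕ β} (h : auxAdj E ρ x y) (hxs : x ≠ inl s)
    (hxv : x ≠ inr v) : auxAdj E (insert (s, v) (ρ.erase (u, v))) x y := by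
  match x, y, h with
  | inl a, inr b, ⟨hE, hρ⟩ =>
    refine ⟨hE, fun hmem => ?_⟩
    rcases mem_insert.1 hmem with h | h
    · exact hxs (by simp_all)
    · exact hρ (mem_of_mem_erase h)
  | inr b, inl a, (h : (a, b) ∈ ρ) =>
    exact mem_insert_of_mem (mem_erase.2 ⟨fun h => hxv (by simp_all), h⟩)

theorem IsPerfectMatchingExcept.symmDiff_usedEdges (w : α × β → ℝ) :
    ∀ {ρ : Finset (α × β)} {s : α} {P : List (α ⊕ β)}, IsPerfectMatchingExcept E ρ s t →
      IsDiPath (auxAdj E ρ) (inl s) (inr t) P →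
      IsPerfectMatching E (symmDiff ρ (usedEdges P)) ∧
        matchingWeight w (symmDiff ρ (usedEdges P)) = matchingWeight w ρ + walkWeight (auxW w) P
  | ρ, s, [inl s', inr v], hρ, hP => by
    obtain rfl : s = s' := by simpa using hP.1.symm
    obtain rfl : v = t := by simpa using hP.2.1
    obtain ⟨⟨hsv, hsvρ⟩, -⟩ := hP.of_cons_cons
    have hsymm : symmDiff ρ (usedEdges [inl s, inr v]) = insert (s, v) ρ := by
      ext e
      simp only [usedEdges_inl_inr_cons, usedEdges_singleton, insert_empty_eq,
        mem_symmDiff, mem_singleton, mem_insert]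
      grind
    refine hsymm ▸ ⟨hρ.isPerfectMatching_insert hsv, ?_⟩
    rw [matchingWeight, sum_insert hsvρ, ← matchingWeight, walkWeight_cons_cons]
    simp [walkWeight, auxW, add_comm]
  | ρ, s, inl s' :: inr v :: inl u :: l, hρ, hP => by
    obtain rfl : s = s' := by simpa using hP.1.symm
    obtain ⟨⟨hsv, hsvρ⟩, hP'⟩ := hP.of_cons_cons
    obtain ⟨huv, hrest⟩ := hP'.of_cons_cons
    have hs_notMem : inl s ∉ inl u :: l :=
      fun h => (List.nodup_cons.1 hP.2.2.2).1 (List.mem_cons_of_mem _ h)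
    have hv_notMem : inr v ∉ inl u :: l := (List.nodup_cons.1 (List.nodup_cons.1 hP.2.2.2).2).1
    have hvt : v ≠ t := by
      rintro rfl; exact hv_notMem (List.mem_of_getLast? hrest.2.1)
    obtain ⟨hpm, hweight⟩ := (hρ.exchange hsv huv hvt).symmDiff_usedEdges w (P := inl u :: l)
      (hrest.mono fun x hx y hxy =>
        auxAdj_insert_erase hxy (fun h => hs_notMem (h ▸ hx)) (fun h => hv_notMem (h ▸ hx)))
    rw [usedEdges_inl_inr_cons, usedEdges_inr_inl_cons, symmDiff_insert_insert hsvρ huv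
      (fun h => hs_notMem (mem_of_mem_usedEdges h).1)
      (fun h => hv_notMem (mem_of_mem_usedEdges h).2)]
    refine ⟨hpm, ?_⟩
    rw [hweight, matchingWeight_insert_erase w hsvρ huv, walkWeight_cons_cons,
      walkWeight_cons_cons]
    simp only [auxW]
    ring
  | _, _, [], _, hP => by simp [IsDiPath] at hP
  | _, _, [_], _, ⟨h₁, h₂, _⟩ => by simp_all
  | _, _, inr _ :: _, _, hP => by simp [IsDiPath] at hP
  | _, _, inl _ :: inl _ :: _, _, hP => absurd hP.of_cons_cons.1 (by simp [auxAdj])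
  | _, _, inl _ :: inr _ :: inr _ :: _, _, hP =>
    absurd hP.of_cons_cons.2.of_cons_cons.1 (by simp [auxAdj])

end Exchange

lemma Equiv.exists_piecewise (e₁ e₂ : α ≃ β) (p : α → Prop) [DecidablePred p]
    (hp : ∀ u, p (e₁.symm (e₂ u)) ↔ p u) :
    ∃ e : α ≃ β, (∀ u, p u → e u = e₂ u) ∧ ∀ u, ¬p u → e u = e₁ u := by
  refine ⟨(Perm.ofSubtype (Perm.subtypePerm (e₂.trans e₁.symm) hp)).trans e₁, fun u hu => ?_,
    fun u hu => ?_⟩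
  · rw [trans_apply, Perm.ofSubtype_apply_of_mem _ hu]
    exact e₁.apply_symm_apply (e₂ u)
  · simp [Perm.ofSubtype_apply_of_not_mem _ hu]

section Bijections

variable [Fintype α] [DecidableEq α] [DecidableEq β]

def graphFinset (e : α ≃ β) : Finset (α × β) := univ.image fun u => (u, e u)

@[simp]
lemma mem_graphFinset {e : α ≃ β} {a : α} {b : β} : (a, b) ∈ graphFinset e ↔ e a = b := by
  simp [graphFinset, eq_comm]

lemma matchingWeight_graphFinset (w : α × β → ℝ) (e : α ≃ β) :
    matchingWeight w (graphFinset e) = ∑ u, w (u, e u) :=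
  sum_image fun _ _ _ _ h => congrArg Prod.fst h

lemma isPerfectMatching_graphFinset {E : Finset (α × β)} {e : α ≃ β} :
    IsPerfectMatching E (graphFinset e) ↔ ∀ u, (u, e u) ∈ E := by
  refine ⟨fun h u => h.1 (mem_graphFinset.2 rfl), fun h => ⟨?_, ?_, ?_, ?_⟩⟩
  · rintro ⟨a, b⟩ hab
    obtain rfl := mem_graphFinset.1 hab
    exact h a
  · rintro ⟨a, b⟩ hab ⟨a', b'⟩ hab' heq
    simp only [mem_graphFinset] at hab hab'
    subst hab hab'
    rcases heq with (rfl : a = a') | heq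
    · rfl
    · rw [e.injective heq]
  · exact fun u => ⟨e u, mem_graphFinset.2 rfl⟩
  · exact fun v => ⟨e.symm v, mem_graphFinset.2 (e.apply_symm_apply v)⟩

lemma IsPerfectMatching.exists_eq_graphFinset {E ν : Finset (α × β)}
    (hν : IsPerfectMatching E ν) : ∃ e : α ≃ β, ν = graphFinset e := by
  obtain ⟨-, hmatch, hleft, hright⟩ := hν
  choose g hg using hleft
  have hg_unique : ∀ a b, (a, b) ∈ ν → g a = b :=
    fun a b hab => congrArg Prod.snd (hmatch _ (hg a) _ hab (.inl rfl))
  have hbij : Bijective g := by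
    refine ⟨fun a a' h => congrArg Prod.fst (hmatch _ (hg a) _ (hg a') (.inr h)), fun b => ?_⟩
    obtain ⟨a, ha⟩ := hright b
    exact ⟨a, hg_unique a b ha⟩
  refine ⟨.ofBijective g hbij, ?_⟩
  ext ⟨a, b⟩
  rw [mem_graphFinset, Equiv.ofBijective_apply]
  exact ⟨hg_unique a b, fun h => h ▸ hg a⟩

lemma IsMinPerfectMatching.sum_compl_le {E : Finset (α × β)} {w : α × β → ℝ} {eμ eν : α ≃ β}
    (hμ : IsMinPerfectMatching E w (graphFinset eμ)) (hν : IsPerfectMatching E (graphFinset eν))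
    (O : Finset α) (hO : ∀ u, eν.symm (eμ u) ∈ O ↔ u ∈ O) :
    ∑ u ∈ Oᶜ, w (u, eμ u) ≤ ∑ u ∈ Oᶜ, w (u, eν u) := by
  obtain ⟨e, he_in, he_out⟩ := Equiv.exists_piecewise eν eμ (· ∈ O) hO
  have hμE := isPerfectMatching_graphFinset.1 hμ.1
  have hνE := isPerfectMatching_graphFinset.1 hν
  have he : IsPerfectMatching E (graphFinset e) := by
    refine isPerfectMatching_graphFinset.2 fun u => ?_
    by_cases hu : u ∈ O
    · rw [he_in u hu]; exact hμE u
    · rw [he_out u hu]; exact hνE u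
  have hle := hμ.2 _ he
  have h_in : ∑ u ∈ O, w (u, e u) = ∑ u ∈ O, w (u, eμ u) :=
    sum_congr rfl fun u hu => by rw [he_in u hu]
  have h_out : ∑ u ∈ Oᶜ, w (u, e u) = ∑ u ∈ Oᶜ, w (u, eν u) :=
    sum_congr rfl fun u hu => by rw [he_out u (mem_compl.1 hu)]
  rw [matchingWeight_graphFinset, matchingWeight_graphFinset, ← sum_add_sum_compl O,
    ← sum_add_sum_compl O fun u => w (u, e u), h_in, h_out] at hle
  linarith

end Bijections

namespace Equiv.Perm

lemma minimalPeriod_pos [Finite α] (σ : Perm α) (s : α) : 0 < minimalPeriod σ s :=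
  minimalPeriod_pos_of_mem_periodicPts (σ.injective.mem_periodicPts s)

variable [Fintype α] [DecidableEq α] (σ : Perm α) (s : α)

lemma filter_sameCycle_eq_image_range :
    univ.filter (σ.SameCycle s) = (range (minimalPeriod σ s)).image (σ^[·] s) := by
  ext u
  simp only [mem_filter, mem_univ, true_and, mem_image, mem_range]
  constructor
  · intro h
    obtain ⟨n, rfl⟩ := h.exists_nat_pow_eq
    exact ⟨n % minimalPeriod σ s, Nat.mod_lt _ (σ.minimalPeriod_pos s),
      by rw [iterate_mod_minimalPeriod_eq, coe_pow]⟩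
  · rintro ⟨m, -, rfl⟩
    exact ⟨m, by rw [zpow_natCast, coe_pow]⟩

lemma sum_filter_sameCycle {M : Type*} [AddCommMonoid M] (F : α → M) :
    ∑ u ∈ univ.filter (σ.SameCycle s), F u = ∑ m ∈ range (minimalPeriod σ s), F (σ^[m] s) := by
  rw [filter_sameCycle_eq_image_range, sum_image]
  intro m hm m' hm' h
  exact iterate_injOn_Iio_minimalPeriod (mem_range.1 hm) (mem_range.1 hm') h

end Equiv.Perm

/-- The walk `f 0, g 0, f 1, g 1, …, f (k - 1), g (k - 1)`. -/
def altWalk (f : ℕ → α) (g : ℕ → β) : ℕ → List (α ⊕ β)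
  | 0 => []
  | k + 1 => inl (f 0) :: inr (g 0) :: altWalk (fun m => f (m + 1)) (fun m => g (m + 1)) k

lemma mem_altWalk {x : α ⊕ β} : ∀ {k : ℕ} {f : ℕ → α} {g : ℕ → β},
    x ∈ altWalk f g k ↔ ∃ m < k, x = inl (f m) ∨ x = inr (g m)
  | 0, _, _ => by simp [altWalk]
  | k + 1, f, g => by
    simp only [altWalk, List.mem_cons, mem_altWalk]
    constructor
    · rintro (h | h | ⟨m, hm, h⟩)
      exacts [⟨0, by omega, .inl h⟩, ⟨0, by omega, .inr h⟩, ⟨m + 1, by omega, h⟩]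
    · rintro ⟨_ | m, hm, h⟩
      · tauto
      · exact .inr (.inr ⟨m, by omega, h⟩)

lemma getLast?_altWalk : ∀ {k : ℕ} {f : ℕ → α} {g : ℕ → β},
    (altWalk f g (k + 1)).getLast? = some (inr (g k))
  | 0, _, _ => rfl
  | k + 1, f, g => by
    rw [altWalk, List.getLast?_cons_cons, List.getLast?_cons, getLast?_altWalk]
    rfl

lemma isChain_altWalk {R : α ⊕ β → α ⊕ β → Prop} : ∀ {k : ℕ} {f : ℕ → α} {g : ℕ → β},
    (∀ m < k, R (inl (f m)) (inr (g m))) → (∀ m, m + 1 < k → R (inr (g m)) (inl (f (m + 1)))) →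
      (altWalk f g k).IsChain R
  | 0, _, _, _, _ => List.isChain_nil
  | k + 1, f, g, h₁, h₂ => by
    refine List.IsChain.cons_cons (h₁ 0 (by omega)) (List.isChain_cons.2 ⟨?_, ?_⟩)
    · rcases k with _ | k
      · simp [altWalk]
      · simpa [altWalk] using h₂ 0 (by omega)
    · exact isChain_altWalk (fun m hm => h₁ (m + 1) (by omega))
        (fun m hm => h₂ (m + 1) (by omega))

lemma nodup_altWalk : ∀ {k : ℕ} {f : ℕ → α} {g : ℕ → β},
    Set.InjOn f (Set.Iio k) → Set.InjOn g (Set.Iio k) → (altWalk f g k).Nodup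
  | 0, _, _, _, _ => List.nodup_nil
  | k + 1, f, g, hf, hg => by
    have hsucc : Set.MapsTo (· + 1) (Set.Iio k) (Set.Iio (k + 1)) :=
      fun m hm => by simp only [Set.mem_Iio] at hm ⊢; omega
    simp only [altWalk, List.nodup_cons, List.mem_cons, mem_altWalk, not_or, not_exists, not_and]
    refine ⟨⟨by simp, fun m hm => ⟨fun h => ?_, by simp⟩⟩, fun m hm => ⟨by simp, fun h => ?_⟩,
      nodup_altWalk (hf.comp (add_left_injective 1).injOn hsucc)
        (hg.comp (add_left_injective 1).injOn hsucc)⟩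
    · exact m.succ_ne_zero (hf (by simp) (hsucc hm) (inl_injective h)).symm
    · exact m.succ_ne_zero (hg (by simp) (hsucc hm) (inr_injective h)).symm

lemma walkWeight_altWalk (w : α × β → ℝ) : ∀ {k : ℕ} {f : ℕ → α} {g : ℕ → β},
    walkWeight (auxW w) (altWalk f g (k + 1)) =
      ∑ m ∈ range (k + 1), w (f m, g m) - ∑ m ∈ range k, w (f (m + 1), g m)
  | 0, _, _ => by simp [altWalk, walkWeight, auxW]
  | k + 1, f, g => by
    have hhead : walkWeight (auxW w) (inr (g 0) :: altWalk (fun m => f (m + 1))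
        (fun m => g (m + 1)) (k + 1)) = -w (f 1, g 0) + walkWeight (auxW w)
          (altWalk (fun m => f (m + 1)) (fun m => g (m + 1)) (k + 1)) := by
      rw [altWalk, walkWeight_cons_cons]; rfl
    rw [altWalk, walkWeight_cons_cons, hhead, walkWeight_altWalk, sum_range_succ' _ (k + 1),
      sum_range_succ' (fun m => w (f (m + 1), g m)) k]
    simp only [auxW]
    ring

lemma isDiPath_altWalk {R : α ⊕ β → α ⊕ β → Prop} {k : ℕ} {f : ℕ → α} {g : ℕ → β}
    (h₁ : ∀ m < k + 1, R (inl (f m)) (inr (g m)))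
    (h₂ : ∀ m, m + 1 < k + 1 → R (inr (g m)) (inl (f (m + 1))))
    (hf : Set.InjOn f (Set.Iio (k + 1))) (hg : Set.InjOn g (Set.Iio (k + 1))) :
    IsDiPath R (inl (f 0)) (inr (g k)) (altWalk f g (k + 1)) :=
  ⟨rfl, getLast?_altWalk, isChain_altWalk h₁ h₂, nodup_altWalk hf hg⟩

section AlternatingCycle

variable [Fintype α] [DecidableEq α] [DecidableEq β]

lemma exists_diPath_sameCycle {E : Finset (α × β)} {eμ eν : α ≃ β} (hν : ∀ u, (u, eν u) ∈ E)
    (w : α × β → ℝ) (s : α) :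
    ∃ Q, IsDiPath (auxAdj E ((graphFinset eμ).erase (s, eμ s))) (inl s) (inr (eμ s)) Q ∧
      walkWeight (auxW w) Q =
        ∑ u ∈ univ.filter (Perm.SameCycle (eν.trans eμ.symm) s), w (u, eν u) -
          ∑ u ∈ univ.filter (Perm.SameCycle (eν.trans eμ.symm) s), w (u, eμ u) + w (s, eμ s) := by
  set σ : Perm α := eν.trans eμ.symm
  obtain ⟨k, hk⟩ := Nat.exists_eq_add_one_of_ne_zero (σ.minimalPeriod_pos s).ne'
  set f : ℕ → α := (σ^[·] s)
  have hf_succ : ∀ m, eν (f m) = eμ (f (m + 1)) := fun m => by simp [f, iterate_succ_apply', σ]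
  have hf_inj : Set.InjOn f (Set.Iio (k + 1)) := hk ▸ iterate_injOn_Iio_minimalPeriod
  have hf_period : f (k + 1) = s := hk ▸ iterate_minimalPeriod
  have hQ := isDiPath_altWalk (R := auxAdj E ((graphFinset eμ).erase (s, eμ s))) (g := eν ∘ f)
    ?_ ?_ hf_inj (eν.injective.comp_injOn hf_inj)
  · refine ⟨_, by rwa [comp_apply, hf_succ, hf_period] at hQ, ?_⟩
    have hsum (F : α → ℝ) :
        ∑ u ∈ univ.filter (σ.SameCycle s), F u = ∑ m ∈ range (k + 1), F (f m) := by
      rw [σ.sum_filter_sameCycle, hk]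
    rw [walkWeight_altWalk, hsum, hsum, sum_range_succ' (fun m => w (f m, eμ (f m)))]
    simp only [comp_apply, hf_succ]
    rw [show f 0 = s from rfl]
    ring
  · intro m hm
    refine ⟨hν _, fun hmem => ?_⟩
    obtain ⟨hne, hmem⟩ := mem_erase.1 hmem
    have heq : eμ (f m) = eν (f m) := mem_graphFinset.1 hmem
    have hfix : σ (f m) = f m := by simp [σ, ← heq]
    have hs : f m = s := by
      rw [← hf_period, ← iterate_fixed hfix (k + 1 - m)]
      change σ^[k + 1 - m] (σ^[m] s) = σ^[k + 1] s
      rw [← iterate_add_apply, Nat.sub_add_cancel hm.le]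
    rw [hs] at heq
    exact hne (by rw [comp_apply, hs, heq])
  · intro m hm
    refine mem_erase.2 ⟨fun h => m.succ_ne_zero (hf_inj ?_ (by simp) (congrArg Prod.fst h)),
      by rw [comp_apply, hf_succ]; exact mem_graphFinset.2 rfl⟩
    simpa using hm

lemma IsMinPerfectMatching.sum_compl_sameCycle_le {E : Finset (α × β)} {w w' : α × β → ℝ}
    {eμ eν : α ≃ β} (hμ : IsMinPerfectMatching E w (graphFinset eμ))
    (hν : IsPerfectMatching E (graphFinset eν)) {s : α} (hw' : ∀ e ∈ E, e.1 ≠ s → w' e = w e) :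
    ∑ u ∈ (univ.filter (Perm.SameCycle (eν.trans eμ.symm) s))ᶜ, w' (u, eμ u) ≤
      ∑ u ∈ (univ.filter (Perm.SameCycle (eν.trans eμ.symm) s))ᶜ, w' (u, eν u) := by
  have hne : ∀ u ∈ (univ.filter (Perm.SameCycle (eν.trans eμ.symm) s))ᶜ, u ≠ s := by
    rintro u hu rfl
    exact mem_compl.1 hu (mem_filter.2 ⟨mem_univ _, .refl _ _⟩)
  rw [sum_congr rfl fun u hu => hw' _ (isPerfectMatching_graphFinset.1 hμ.1 u) (hne u hu),
    sum_congr rfl fun u hu => hw' _ (isPerfectMatching_graphFinset.1 hν u) (hne u hu)]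
  exact hμ.sum_compl_le hν _ fun u => by
    simpa using Perm.sameCycle_symm_apply_right (f := eν.trans eμ.symm) (x := s) (y := u)

end AlternatingCycle

theorem exchange_along_shortest_path_is_optimal_general
    [Fintype α] [DecidableEq α] [DecidableEq β]
    (E μ : Finset (α × β)) (w tw : α × β → ℝ) (s : α) (t : β) (P : List (α ⊕ β))
    (hμ : IsMinPerfectMatching E w μ)
    (htw : ∀ e ∈ E, e.1 ≠ s → tw e = w e)
    (het : (s, t) ∈ μ)
    (hP : IsDiPath (auxAdj E (μ.erase (s, t))) (Sum.inl s) (Sum.inr t) P)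
    (hPmin : ∀ Q : List (α ⊕ β), IsDiPath (auxAdj E (μ.erase (s, t))) (Sum.inl s) (Sum.inr t) Q →
      walkWeight (auxW tw) P ≤ walkWeight (auxW tw) Q) :
    IsMinPerfectMatching E tw (symmDiff (μ.erase (s, t)) (usedEdges P)) := by
  obtain ⟨hpm, hweight⟩ := (hμ.1.isPerfectMatchingExcept_erase het).symmDiff_usedEdges tw hP
  refine ⟨hpm, fun ν hν => ?_⟩
  obtain ⟨eμ, rfl⟩ := hμ.1.exists_eq_graphFinset
  obtain ⟨eν, rfl⟩ := hν.exists_eq_graphFinset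
  obtain rfl : eμ s = t := mem_graphFinset.1 het
  obtain ⟨Q, hQ, hQweight⟩ :=
    exists_diPath_sameCycle (eμ := eμ) (isPerfectMatching_graphFinset.1 hν) tw s
  have h_off_cycle := hμ.sum_compl_sameCycle_le hν htw
  set O := univ.filter (Perm.SameCycle (eν.trans eμ.symm) s)
  calc matchingWeight tw (symmDiff ((graphFinset eμ).erase (s, eμ s)) (usedEdges P))
      = matchingWeight tw ((graphFinset eμ).erase (s, eμ s)) + walkWeight (auxW tw) P := hweight
    _ ≤ matchingWeight tw ((graphFinset eμ).erase (s, eμ s)) + walkWeight (auxW tw) Q := by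
      gcongr; exact hPmin Q hQ
    _ = ∑ u ∈ Oᶜ, tw (u, eμ u) + ∑ u ∈ O, tw (u, eν u) := by
      rw [matchingWeight, sum_erase_eq_sub (mem_graphFinset.2 rfl), ← matchingWeight,
        matchingWeight_graphFinset, hQweight, ← sum_add_sum_compl O]
      ring
    _ ≤ ∑ u ∈ Oᶜ, tw (u, eν u) + ∑ u ∈ O, tw (u, eν u) := by gcongr
    _ = matchingWeight tw (graphFinset eν) := by
      rw [matchingWeight_graphFinset, ← sum_add_sum_compl O]
      ring

/-- If `μ` is a minimum-weight perfect matching for `(G, w)`, `s ∈ V⁺` with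
`δ_G(s) = {s} × V⁻`, `w̃` agrees with `w` off `δ_G(s)`, `e' = (s,t) ∈ μ`, `μ' = μ \ {e'}`, and
`P` is a shortest directed `s`–`t` path in `(G_{μ'}, w̃_{μ'})`, then `μ' △ P` is a
minimum-weight perfect matching for `(G, w̃)`. -/
theorem exchange_along_shortest_path_is_optimal
    [Fintype α] [Fintype β] [DecidableEq α] [DecidableEq β]
    (E μ : Finset (α × β)) (w tw : α × β → ℝ) (s : α) (t : β) (P : List (α ⊕ β))
    (hμ : IsMinPerfectMatching E w μ)
    (hs : ∀ v : β, (s, v) ∈ E)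
    (htw : ∀ e ∈ E, e.1 ≠ s → tw e = w e)
    (het : (s, t) ∈ μ)
    (hP : IsDiPath (auxAdj E (μ.erase (s, t))) (Sum.inl s) (Sum.inr t) P)
    (hPmin : ∀ Q : List (α ⊕ β), IsDiPath (auxAdj E (μ.erase (s, t))) (Sum.inl s) (Sum.inr t) Q →
      walkWeight (auxW tw) P ≤ walkWeight (auxW tw) Q) :
    IsMinPerfectMatching E tw (symmDiff (μ.erase (s, t)) (usedEdges P)) :=
  exchange_along_shortest_path_is_optimal_general E μ w tw s t P hμ htw het hP hPmin
end

section
/- Let G = (V⁺, V⁻; E) be a simple bipartite graph with edge weights w : E → ℝ, let μ be a minimum-weight perfect matching in (G, w), let s ∈ V⁺, and let w̃ : E → ℝ be new weights satisfying w̃(e) = w(e) for every edge e ∈ E ∖ δ_G(s). Suppose μ* is a perfect matching in G with w̃(μ*) < w̃(μ). Then the symmetric difference μ* △ μ contains a directed cycle C in the auxiliary graph G_μ that passes through s and satisfies w̃_μ(C) ≤ w̃(μ*) − w̃(μ) < 0, and C is the only cycle of μ* △ μ with negative weight under w̃_μ. -/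
/-!  Common setup: weighted bipartite graphs `G = (V⁺, V⁻; E)` with `V⁺ = α`, `V⁻ = β`,
edges directed from `V⁺` to `V⁻`, auxiliary graphs of matchings, walks and cycles. -/

variable {α β : Type*}

/-!
Write `μ` and `μ*` as bijections `σ, σ' : V⁺ ≃ V⁻`. Following `μ* △ μ` through `G_μ` (leave
`V⁺` along `μ*`, come back along `μ`) is a permutation of `V⁺ ⊔ V⁻`; a cycle of `G_μ` inside
`μ* △ μ` is exactly one of its cycles, and its `w̃_μ`-weight is the sum of
`w̃(u, σ' u) - w̃(u, σ u)` over its vertices `u ∈ V⁺`. Switching `μ` to `μ*` along any union of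
cycles avoiding `s` gives a perfect matching, so by minimality of `μ` (and `w̃ = w` away from `s`)
such a union has nonnegative weight. Hence the cycle through `s` weighs at most
`w̃(μ*) - w̃(μ) < 0`, and it is the only cycle of negative weight.
-/
namespace List

variable {V : Type*} {f : V → V} {R : V → V → Prop} {l l' : List V} {x y : V}

theorem isChain_iff_forall_mem_zip_tail {L : List V} :
    L.IsChain R ↔ ∀ p ∈ L.zip L.tail, R p.1 p.2 := by
  induction L with
  | nil => simp
  | cons a t ih => cases t with
    | nil => simp
    | cons b t => simp_all

theorem isChain_eq_apply_iff {L : List V} :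
    L.IsChain (fun x y => y = f x) ↔ L.tail = L.dropLast.map f := by
  induction L with
  | nil => simp
  | cons a t ih => cases t with
    | nil => simp
    | cons b t => simp_all

theorem tail_append_take_one (hl : l ≠ []) : (l ++ l.take 1).tail = l.rotate 1 := by
  obtain ⟨a, t, rfl⟩ := exists_cons_of_ne_nil hl
  simp

theorem dropLast_append_take_one (hl : l ≠ []) : (l ++ l.take 1).dropLast = l := by
  rw [dropLast_append_of_ne_nil (by simpa using hl)]
  obtain ⟨a, t, rfl⟩ := exists_cons_of_ne_nil hl
  simp

theorem isChain_append_take_one_eq_apply_iff (hl : l ≠ []) :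
    (l ++ l.take 1).IsChain (fun x y => y = f x) ↔ l.map f = l.rotate 1 := by
  rw [isChain_eq_apply_iff, tail_append_take_one hl, dropLast_append_take_one hl, eq_comm]

theorem zip_tail_append_take_one (h : l.map f = l.rotate 1) :
    (l ++ l.take 1).zip (l ++ l.take 1).tail = l.map fun x => (x, f x) := by
  rcases eq_or_ne l [] with rfl | hl
  · simp
  rw [tail_append_take_one hl, ← h, ← append_nil (l.map f), zip_append (by simp)]
  simpa using zip_map' (f := id) (g := f) (l := l)

theorem isChain_append_take_one_iff (h : l.map f = l.rotate 1) :
    (l ++ l.take 1).IsChain R ↔ ∀ x ∈ l, R x (f x) := by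
  simp [isChain_iff_forall_mem_zip_tail, zip_tail_append_take_one h]

theorem getElem_succ_of_map_eq_rotate (h : l.map f = l.rotate 1) (i : ℕ)
    (hi : i + 1 < l.length) : l[i + 1] = f l[i] := by
  have := getElem_of_eq h (i := i) (by simp; omega)
  simpa [getElem_rotate, Nat.mod_eq_of_lt hi] using this.symm

theorem apply_getElem_last_of_map_eq_rotate (h : l.map f = l.rotate 1) (hl : 0 < l.length) :
    f l[l.length - 1] = l[0] := by
  have := getElem_of_eq h (i := l.length - 1) (by simp; omega)
  simpa [getElem_rotate, Nat.sub_add_cancel hl] using this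

theorem getElem_eq_iterate_of_map_eq_rotate (h : l.map f = l.rotate 1) (i : ℕ)
    (hi : i < l.length) :
    l[i] = f^[i] l[0] := by
  induction i with
  | zero => rfl
  | succ i ih => rw [getElem_succ_of_map_eq_rotate h i hi, ih, Function.iterate_succ_apply']

theorem iterate_length_of_map_eq_rotate (h : l.map f = l.rotate 1) (hl : 0 < l.length) :
    f^[l.length] l[0] = l[0] := by
  obtain ⟨n, hn⟩ := Nat.exists_eq_add_one.mpr hl
  have hlast := apply_getElem_last_of_map_eq_rotate h hl
  simp only [hn, Nat.add_sub_cancel] at hlast ⊢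
  rw [Function.iterate_succ_apply', ← getElem_eq_iterate_of_map_eq_rotate h n (by omega), hlast]

theorem exists_iterate_eq_of_map_eq_rotate (h : l.map f = l.rotate 1) (hx : x ∈ l) (hy : y ∈ l) :
    ∃ k, f^[k] x = y := by
  obtain ⟨i, hi, rfl⟩ := getElem_of_mem hx
  obtain ⟨j, hj, rfl⟩ := getElem_of_mem hy
  refine ⟨j + (l.length - i), ?_⟩
  rw [getElem_eq_iterate_of_map_eq_rotate h i hi, getElem_eq_iterate_of_map_eq_rotate h j hj,
    Function.iterate_add_apply, ← Function.iterate_add_apply (m := l.length - i),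
    Nat.sub_add_cancel hi.le, iterate_length_of_map_eq_rotate h (by omega)]

theorem apply_mem_of_map_eq_rotate (h : l.map f = l.rotate 1) (hx : x ∈ l) : f x ∈ l := by
  rw [← mem_rotate (n := 1), ← h]
  exact mem_map_of_mem hx

theorem apply_mem_iff_of_map_eq_rotate (hf : Function.Injective f) (h : l.map f = l.rotate 1) :
    f x ∈ l ↔ x ∈ l := by
  rw [← mem_rotate (n := 1), ← h, mem_map_of_injective hf]

theorem iterate_mem_of_map_eq_rotate (h : l.map f = l.rotate 1) (hx : x ∈ l) (k : ℕ) :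
    f^[k] x ∈ l := by
  induction k with
  | zero => exact hx
  | succ k ih => rw [Function.iterate_succ_apply']; exact apply_mem_of_map_eq_rotate h ih

theorem toFinset_eq_of_map_eq_rotate [DecidableEq V] (h : l.map f = l.rotate 1)
    (h' : l'.map f = l'.rotate 1) (hx : x ∈ l) (hx' : x ∈ l') : l.toFinset = l'.toFinset := by
  have key : ∀ {l l' : List V}, l.map f = l.rotate 1 → l'.map f = l'.rotate 1 →
      x ∈ l → x ∈ l' → l.toFinset ⊆ l'.toFinset := by
    intro l l' h h' hx hx' y hy
    obtain ⟨k, rfl⟩ := exists_iterate_eq_of_map_eq_rotate h hx (mem_toFinset.mp hy)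
    exact mem_toFinset.mpr (iterate_mem_of_map_eq_rotate h' hx' k)
  exact (key h h' hx hx').antisymm (key h' h hx' hx)

end List

theorem Function.Injective.exists_nodup_map_eq_rotate {V : Type*} [Finite V] {f : V → V}
    (hf : Function.Injective f) (x : V) :
    ∃ l : List V, l.Nodup ∧ x ∈ l ∧ l.map f = l.rotate 1 := by
  have hx := hf.mem_periodicPts x
  refine ⟨(List.range (minimalPeriod f x)).map (f^[·] x), ?_, ?_, ?_⟩
  · exact Cycle.nodup_coe_iff.mp nodup_periodicOrbit
  · exact List.mem_map.mpr ⟨0, List.mem_range.mpr (minimalPeriod_pos_of_mem_periodicPts hx), rfl⟩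
  · apply List.ext_getElem (by simp)
    intro i h1 h2
    simp [List.getElem_rotate, ← Function.iterate_succ_apply' f,
      Function.iterate_mod_minimalPeriod_eq]

theorem walkWeight_append_take_one {V : Type*} {f : V → V} {l : List V} (W : V → V → ℝ)
    (h : l.map f = l.rotate 1) :
    walkWeight W (l ++ l.take 1) = (l.map fun x => W x (f x)).sum := by
  rw [walkWeight, List.zip_tail_append_take_one h, List.map_map]
  rfl

section Matching

variable {E μ : Finset (α × β)} {σ : α ≃ β}

theorem IsPerfectMatching.exists_equiv (h : IsPerfectMatching E μ) :
    ∃ σ : α ≃ β, ∀ u v, (u, v) ∈ μ ↔ σ u = v := by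
  obtain ⟨-, hmatch, hleft, hright⟩ := h
  choose m hm using hleft
  have hm_eq : ∀ u v, (u, v) ∈ μ → m u = v := fun u v huv =>
    (congrArg Prod.snd (hmatch _ (hm u) _ huv (Or.inl rfl)) :)
  have hinj : Function.Injective m := fun u u' huu' =>
    (congrArg Prod.fst (hmatch _ (hm u) _ (hm u') (Or.inr huu')) :)
  have hsurj : Function.Surjective m := fun v =>
    (hright v).imp fun u huv => hm_eq u v huv
  exact ⟨Equiv.ofBijective m ⟨hinj, hsurj⟩, fun u v =>
    ⟨hm_eq u v, fun huv => huv ▸ hm u⟩⟩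

theorem matchingWeight_eq_sum [Fintype α] (w : α × β → ℝ)
    (hσ : ∀ u v, (u, v) ∈ μ ↔ σ u = v) : matchingWeight w μ = ∑ u, w (u, σ u) := by
  classical
  have : μ = Finset.univ.image fun u => (u, σ u) := by
    ext ⟨u, v⟩
    simp [hσ]
  rw [matchingWeight, this, Finset.sum_image fun u _ u' _ h => congrArg Prod.fst h]

theorem IsMinPerfectMatching.sum_le [Fintype α]
    {w : α × β → ℝ} (hμ : IsMinPerfectMatching E w μ)
    (hσ : ∀ u v, (u, v) ∈ μ ↔ σ u = v) (τ : α ≃ β) (hτ : ∀ u, (u, τ u) ∈ E) :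
    ∑ u, w (u, σ u) ≤ ∑ u, w (u, τ u) := by
  classical
  have hν : ∀ u v, (u, v) ∈ Finset.univ.image (fun u => (u, τ u)) ↔ τ u = v := by
    simp
  have hpm : IsPerfectMatching E (Finset.univ.image fun u => (u, τ u)) := by
    refine ⟨?_, ?_, fun u => ⟨τ u, by simp⟩, fun v => ⟨τ.symm v, by simp⟩⟩
    · simpa [Finset.subset_iff] using hτ
    · simp only [IsMatching, Finset.mem_image, Finset.mem_univ, true_and]
      rintro _ ⟨u, rfl⟩ _ ⟨u', rfl⟩ (h | h)
      · simp_all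
      · simp_all
  rw [← matchingWeight_eq_sum w hσ, ← matchingWeight_eq_sum w hν]
  exact hμ.2 _ hpm

/-- Switching `σ` to `σ'` on `S`, a union of cycles of `σ⁻¹ ∘ σ'`, gives a perfect matching whose
weight exceeds that of `σ` by this sum. -/
theorem IsMinPerfectMatching.sum_sub_nonneg [Fintype α]
    {w : α × β → ℝ} (hμ : IsMinPerfectMatching E w μ)
    (hσ : ∀ u v, (u, v) ∈ μ ↔ σ u = v) {σ' : α ≃ β} (hσ'E : ∀ u, (u, σ' u) ∈ E)
    {S : Finset α} (hS : ∀ u, σ.symm (σ' u) ∈ S ↔ u ∈ S) :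
    0 ≤ ∑ u ∈ S, (w (u, σ' u) - w (u, σ u)) := by
  classical
  set π : Equiv.Perm α := σ'.trans σ.symm
  set τ : α ≃ β := (Equiv.Perm.ofSubtype (π.subtypePerm hS)).trans σ
  have hτ : ∀ u, τ u = if u ∈ S then σ' u else σ u := by
    intro u
    split_ifs with hu
    · rw [Equiv.trans_apply, Equiv.Perm.ofSubtype_apply_of_mem _ hu]
      exact σ.apply_symm_apply (σ' u)
    · simp [τ, Equiv.Perm.ofSubtype_apply_of_not_mem _ hu]
  have hτE : ∀ u, (u, τ u) ∈ E := by
    intro u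
    rw [hτ]
    split_ifs
    · exact hσ'E u
    · exact hμ.1.1 ((hσ u _).mpr rfl)
  have hsplit : ∀ u, w (u, τ u) = w (u, σ u) + if u ∈ S then w (u, σ' u) - w (u, σ u) else 0 := by
    intro u
    rw [hτ]
    split_ifs <;> ring
  have hle := hμ.sum_le hσ τ hτE
  rw [Finset.sum_congr rfl fun u _ => hsplit u, Finset.sum_add_distrib, Finset.sum_ite_mem,
    Finset.univ_inter] at hle
  linarith

end Matching

section AlternatingStep

variable (σ' σ : α ≃ β)

/-- Its nontrivial cycles are the cycles of `G_μ` inside `μ* △ μ`, where `σ, σ'` encode `μ, μ*`. -/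
def alternatingStep : Equiv.Perm (α ⊕ β) :=
  (σ'.sumCongr σ.symm).trans (Equiv.sumComm β α)

def alternatingEdge : α ⊕ β → α × β
  | Sum.inl u => (u, σ' u)
  | Sum.inr v => (σ.symm v, v)

variable {σ' σ} {E μ' μ : Finset (α × β)} {l : List (α ⊕ β)}

@[simp]
theorem alternatingStep_inl (u : α) : alternatingStep σ' σ (Sum.inl u) = Sum.inr (σ' u) := rfl

@[simp]
theorem alternatingStep_inr (v : β) : alternatingStep σ' σ (Sum.inr v) = Sum.inl (σ.symm v) :=
  rfl

theorem undEdge_alternatingStep (x : α ⊕ β) :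
    undEdge (x, alternatingStep σ' σ x) = some (alternatingEdge σ' σ x) := by
  cases x <;> rfl

theorem auxAdj_alternatingStep (hσ : ∀ u v, (u, v) ∈ μ ↔ σ u = v) (hσ'E : ∀ u, (u, σ' u) ∈ E)
    {x : α ⊕ β} (hx : σ' (alternatingEdge σ' σ x).1 ≠ σ (alternatingEdge σ' σ x).1) :
    auxAdj E μ x (alternatingStep σ' σ x) := by
  cases x with
  | inl u => exact ⟨hσ'E u, fun h => hx ((hσ _ _).mp h).symm⟩
  | inr v => exact (hσ _ _).mpr (σ.apply_symm_apply v)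

theorem alternatingEdge_mem_symmDiff [DecidableEq α] [DecidableEq β]
    (hσ' : ∀ u v, (u, v) ∈ μ' ↔ σ' u = v) (hσ : ∀ u v, (u, v) ∈ μ ↔ σ u = v)
    {x : α ⊕ β} (hx : σ' (alternatingEdge σ' σ x).1 ≠ σ (alternatingEdge σ' σ x).1) :
    alternatingEdge σ' σ x ∈ symmDiff μ' μ := by
  rw [Finset.mem_symmDiff]
  cases x with
  | inl u => exact Or.inl ⟨(hσ' _ _).mpr rfl, fun h => hx ((hσ _ _).mp h).symm⟩
  | inr v =>
    refine Or.inr ⟨(hσ _ _).mpr (σ.apply_symm_apply v), fun h => hx ?_⟩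
    simp only [alternatingEdge, (hσ' _ _).mp h, Equiv.apply_symm_apply]

theorem eq_alternatingStep_of_auxAdj [DecidableEq α] [DecidableEq β]
    (hσ' : ∀ u v, (u, v) ∈ μ' ↔ σ' u = v) (hσ : ∀ u v, (u, v) ∈ μ ↔ σ u = v)
    {x y : α ⊕ β} (hxy : auxAdj E μ x y) (hedge : ∀ e ∈ undEdge (x, y), e ∈ symmDiff μ' μ) :
    y = alternatingStep σ' σ x := by
  match x, y, hxy with
  | Sum.inl u, Sum.inr v, ⟨_, hnot⟩ =>
    have := Finset.mem_symmDiff.mp (hedge (u, v) rfl)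
    rw [alternatingStep_inl, (hσ' u v).mp (this.resolve_right fun h => hnot h.1).1]
  | Sum.inr v, Sum.inl u, hvu => rw [alternatingStep_inr, ← (hσ u v).mp hvu, σ.symm_apply_apply]

theorem inl_alternatingEdge_fst_mem (h : l.map (alternatingStep σ' σ) = l.rotate 1)
    {x : α ⊕ β} (hx : x ∈ l) : Sum.inl (alternatingEdge σ' σ x).1 ∈ l := by
  cases x with
  | inl u => exact hx
  | inr v => exact List.apply_mem_of_map_eq_rotate h hx

theorem isDiCycle_of_map_eq_rotate (hσ : ∀ u v, (u, v) ∈ μ ↔ σ u = v)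
    (hσ'E : ∀ u, (u, σ' u) ∈ E) (hne : l ≠ []) (hl : l.Nodup)
    (h : l.map (alternatingStep σ' σ) = l.rotate 1)
    (hmoved : ∀ u, Sum.inl u ∈ l → σ' u ≠ σ u) : IsDiCycle (auxAdj E μ) l :=
  ⟨hne, hl, (List.isChain_append_take_one_iff h).mpr fun _ hx =>
    auxAdj_alternatingStep hσ hσ'E (hmoved _ (inl_alternatingEdge_fst_mem h hx))⟩

end AlternatingStep

section AlternatingCycle

variable [DecidableEq α] [DecidableEq β] {σ' σ : α ≃ β} {E μ' μ : Finset (α × β)}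
  {l : List (α ⊕ β)}

theorem usedEdges_of_map_eq_rotate (h : l.map (alternatingStep σ' σ) = l.rotate 1) :
    usedEdges (l ++ l.take 1) = l.toFinset.image (alternatingEdge σ' σ) := by
  rw [usedEdges, List.zip_tail_append_take_one h, List.filterMap_map]
  simp only [Function.comp_def, undEdge_alternatingStep]
  ext e
  simp

theorem symm_apply_mem_toLeft_iff (h : l.map (alternatingStep σ' σ) = l.rotate 1) (u : α) :
    σ.symm (σ' u) ∈ l.toFinset.toLeft ↔ u ∈ l.toFinset.toLeft := by
  simp only [Finset.mem_toLeft, List.mem_toFinset]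
  rw [← alternatingStep_inr, List.apply_mem_iff_of_map_eq_rotate (alternatingStep σ' σ).injective h,
    ← alternatingStep_inl, List.apply_mem_iff_of_map_eq_rotate (alternatingStep σ' σ).injective h]

theorem cycleWeight_of_map_eq_rotate (w : α × β → ℝ) (hl : l.Nodup)
    (h : l.map (alternatingStep σ' σ) = l.rotate 1) :
    cycleWeight (auxW w) l = ∑ u ∈ l.toFinset.toLeft, (w (u, σ' u) - w (u, σ u)) := by
  have hright : ∑ v ∈ l.toFinset.toRight, auxW w (Sum.inr v) (Sum.inl (σ.symm v)) =
      ∑ u ∈ l.toFinset.toLeft, -w (u, σ u) := by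
    refine (Finset.sum_equiv σ (fun u => ?_) fun u _ => ?_).symm
    · simp only [Finset.mem_toLeft, Finset.mem_toRight, List.mem_toFinset]
      rw [← List.apply_mem_iff_of_map_eq_rotate (alternatingStep σ' σ).injective h
        (x := Sum.inr (σ u)), alternatingStep_inr, σ.symm_apply_apply]
    · simp [auxW]
  rw [cycleWeight, walkWeight_append_take_one _ h, ← List.sum_toFinset _ hl]
  conv_lhs => rw [← Finset.toLeft_disjSum_toRight (u := l.toFinset), Finset.sum_disjSum]
  simp only [alternatingStep_inl, alternatingStep_inr, hright, ← Finset.sum_add_distrib]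
  simp [auxW, sub_eq_add_neg]

theorem cycleWeight_eq_zero_of_fixed (w : α × β → ℝ) (hl : l.Nodup)
    (h : l.map (alternatingStep σ' σ) = l.rotate 1) {u : α} (hu : Sum.inl u ∈ l)
    (hfix : σ' u = σ u) : cycleWeight (auxW w) l = 0 := by
  have hiter : ∀ k, (alternatingStep σ' σ)^[k] (Sum.inl u) = Sum.inl u ∨
      (alternatingStep σ' σ)^[k] (Sum.inl u) = Sum.inr (σ' u) := by
    intro k
    induction k with
    | zero => exact Or.inl rfl
    | succ k ih =>
      rw [Function.iterate_succ_apply']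
      rcases ih with ih | ih <;> rw [ih]
      · exact Or.inr rfl
      · exact Or.inl (by rw [alternatingStep_inr, hfix, σ.symm_apply_apply])
  rw [cycleWeight_of_map_eq_rotate w hl h]
  refine Finset.sum_eq_zero fun u' hu' => ?_
  obtain ⟨k, hk⟩ := List.exists_iterate_eq_of_map_eq_rotate h hu
    (List.mem_toFinset.mp (Finset.mem_toLeft.mp hu'))
  obtain rfl : u' = u := by simpa [hk] using hiter k
  rw [hfix, sub_self]

theorem usedEdges_subset_symmDiff (hσ' : ∀ u v, (u, v) ∈ μ' ↔ σ' u = v)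
    (hσ : ∀ u v, (u, v) ∈ μ ↔ σ u = v) (h : l.map (alternatingStep σ' σ) = l.rotate 1)
    (hmoved : ∀ u, Sum.inl u ∈ l → σ' u ≠ σ u) :
    usedEdges (l ++ l.take 1) ⊆ symmDiff μ' μ := by
  rw [usedEdges_of_map_eq_rotate h]
  intro e he
  obtain ⟨x, hx, rfl⟩ := Finset.mem_image.mp he
  exact alternatingEdge_mem_symmDiff hσ' hσ
    (hmoved _ (inl_alternatingEdge_fst_mem h (List.mem_toFinset.mp hx)))

theorem map_alternatingStep_eq_rotate (hσ' : ∀ u v, (u, v) ∈ μ' ↔ σ' u = v)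
    (hσ : ∀ u v, (u, v) ∈ μ ↔ σ u = v) (hC : IsDiCycle (auxAdj E μ) l)
    (hsub : usedEdges (l ++ l.take 1) ⊆ symmDiff μ' μ) :
    l.map (alternatingStep σ' σ) = l.rotate 1 := by
  obtain ⟨hne, -, hchain⟩ := hC
  rw [← List.isChain_append_take_one_eq_apply_iff hne, List.isChain_iff_forall_mem_zip_tail]
  intro p hp
  refine eq_alternatingStep_of_auxAdj hσ' hσ
    (List.isChain_iff_forall_mem_zip_tail.mp hchain p hp) fun e he => hsub ?_
  exact List.mem_toFinset.mpr (List.mem_filterMap.mpr ⟨p, hp, he⟩)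

end AlternatingCycle

theorem negative_cycle_through_updated_vertex_general
    [Fintype α] [DecidableEq α] [DecidableEq β]
    (E μ μstar : Finset (α × β)) (w tw : α × β → ℝ) (s : α)
    (hμ : IsMinPerfectMatching E w μ)
    (htw : ∀ e ∈ E, e.1 ≠ s → tw e = w e)
    (hstar : IsPerfectMatching E μstar)
    (hlt : matchingWeight tw μstar < matchingWeight tw μ) :
    ∃ C : List (α ⊕ β), IsDiCycle (auxAdj E μ) C ∧
      usedEdges (C ++ C.take 1) ⊆ symmDiff μstar μ ∧
      Sum.inl s ∈ C ∧
      cycleWeight (auxW tw) C ≤ matchingWeight tw μstar - matchingWeight tw μ ∧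
      cycleWeight (auxW tw) C < 0 ∧
      ∀ C' : List (α ⊕ β), IsDiCycle (auxAdj E μ) C' →
        usedEdges (C' ++ C'.take 1) ⊆ symmDiff μstar μ →
        cycleWeight (auxW tw) C' < 0 →
        usedEdges (C' ++ C'.take 1) = usedEdges (C ++ C.take 1) := by
  obtain ⟨σ, hσ⟩ := hμ.1.exists_equiv
  obtain ⟨σ', hσ'⟩ := hstar.exists_equiv
  have hσ'E : ∀ u, (u, σ' u) ∈ E := fun u => hstar.1 ((hσ' u _).mpr rfl)
  have hσE : ∀ u, (u, σ u) ∈ E := fun u => hμ.1.1 ((hσ u _).mpr rfl)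
  have htotal : ∑ u, (tw (u, σ' u) - tw (u, σ u)) =
      matchingWeight tw μstar - matchingWeight tw μ := by
    rw [Finset.sum_sub_distrib, matchingWeight_eq_sum tw hσ', matchingWeight_eq_sum tw hσ]
  have hoff : ∀ S : Finset α, s ∉ S → (∀ u, σ.symm (σ' u) ∈ S ↔ u ∈ S) →
      0 ≤ ∑ u ∈ S, (tw (u, σ' u) - tw (u, σ u)) := fun S hs hS => by
    rw [Finset.sum_congr rfl fun u hu => by
      rw [htw _ (hσ'E u) (ne_of_mem_of_not_mem hu hs), htw _ (hσE u) (ne_of_mem_of_not_mem hu hs)]]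
    exact hμ.sum_sub_nonneg hσ hσ'E hS
  have : Finite β := Finite.of_equiv α σ
  obtain ⟨C, hnd, hsC, hC⟩ :=
    (alternatingStep σ' σ).injective.exists_nodup_map_eq_rotate (Sum.inl s)
  have hwC : cycleWeight (auxW tw) C ≤ matchingWeight tw μstar - matchingWeight tw μ := by
    rw [← htotal, ← Finset.sum_add_sum_compl C.toFinset.toLeft,
      cycleWeight_of_map_eq_rotate tw hnd hC]
    refine le_add_of_nonneg_right (hoff _ (by simpa using hsC) fun u => ?_)
    simp only [Finset.mem_compl, symm_apply_mem_toLeft_iff hC]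
  have hneg : cycleWeight (auxW tw) C < 0 := hwC.trans_lt (sub_neg.mpr hlt)
  have hmoved : ∀ u, Sum.inl u ∈ C → σ' u ≠ σ u := fun u hu hfix =>
    hneg.ne (cycleWeight_eq_zero_of_fixed tw hnd hC hu hfix)
  refine ⟨C, isDiCycle_of_map_eq_rotate hσ hσ'E (List.ne_nil_of_mem hsC) hnd hC hmoved,
    usedEdges_subset_symmDiff hσ' hσ hC hmoved, hsC, hwC, hneg, fun C' hC' hsub' hneg' => ?_⟩
  have hC'step := map_alternatingStep_eq_rotate hσ' hσ hC' hsub'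
  have hsC' : Sum.inl s ∈ C' := by
    by_contra hs
    rw [cycleWeight_of_map_eq_rotate tw hC'.2.1 hC'step] at hneg'
    exact hneg'.not_ge (hoff _ (by simpa using hs) (symm_apply_mem_toLeft_iff hC'step))
  rw [usedEdges_of_map_eq_rotate hC'step, usedEdges_of_map_eq_rotate hC,
    List.toFinset_eq_of_map_eq_rotate hC'step hC hsC' hsC]

/-- Let `μ` be a minimum-weight perfect matching for `(G, w)`, `s ∈ V⁺`, and
let `w̃` agree with `w` off `δ_G(s)`. If `μ*` is a perfect matching with `w̃(μ*) < w̃(μ)`,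
then `μ* △ μ` contains a directed cycle `C` of `G_μ` through `s` with
`w̃_μ(C) ≤ w̃(μ*) − w̃(μ) < 0`, and `C` is the only negative cycle of `μ* △ μ`
(uniqueness stated via the underlying edge sets). -/
theorem negative_cycle_through_updated_vertex
    [Fintype α] [Fintype β] [DecidableEq α] [DecidableEq β]
    (E μ μstar : Finset (α × β)) (w tw : α × β → ℝ) (s : α)
    (hμ : IsMinPerfectMatching E w μ)
    (htw : ∀ e ∈ E, e.1 ≠ s → tw e = w e)
    (hstar : IsPerfectMatching E μstar)
    (hlt : matchingWeight tw μstar < matchingWeight tw μ) :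
    ∃ C : List (α ⊕ β), IsDiCycle (auxAdj E μ) C ∧
      usedEdges (C ++ C.take 1) ⊆ symmDiff μstar μ ∧
      Sum.inl s ∈ C ∧
      cycleWeight (auxW tw) C ≤ matchingWeight tw μstar - matchingWeight tw μ ∧
      cycleWeight (auxW tw) C < 0 ∧
      ∀ C' : List (α ⊕ β), IsDiCycle (auxAdj E μ) C' →
        usedEdges (C' ++ C'.take 1) ⊆ symmDiff μstar μ →
        cycleWeight (auxW tw) C' < 0 →
        usedEdges (C' ++ C'.take 1) = usedEdges (C ++ C.take 1) :=
  negative_cycle_through_updated_vertex_general E μ μstar w tw s hμ htw hstar hlt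
end

section
/- Let G = (V⁺, V⁻; E) be a simple bipartite graph with edge weights w : E → ℝ and let μ be a matching of size k that has minimum weight among all matchings of size k in G. Let P be a shortest augmenting path in the auxiliary weighted graph (G_μ, w_μ), i.e., a directed path from a vertex of V⁺ unmatched by μ to a vertex of V⁻ unmatched by μ of minimum total auxiliary weight among all such paths. Then μ △ P is a matching of size k + 1 that has minimum weight among all matchings of size k + 1 in G. -/
/-!  Common setup: weighted bipartite graphs `G = (V⁺, V⁻; E)` with `V⁺ = α`, `V⁻ = β`,
edges directed from `V⁺` to `V⁻`, auxiliary graphs of matchings, walks and cycles. -/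

variable {α β : Type*}

/-! Let `ν` be a matching of size `k + 1`. Start at an edge of `ν` whose `V⁺`-end is free in `μ`
and follow edges alternately from `ν \ μ` and from `μ` as long as possible. If the walk stops at a
vertex of `V⁻` free in `μ`, it is an augmenting path `Q` of `μ`, and `ν △ Q` is a matching of size
`k`, so `w(ν) = w(ν △ Q) + w_μ(Q) ≥ w(μ) + w_μ(P)`. Otherwise it stops at a vertex of `V⁺` free in
`ν`; then `μ △ Q` is a matching of size `k`, so `w_μ(Q) ≥ 0`, and `ν △ Q` is a matching of size
`k + 1`, no heavier than `ν`, with fewer edges outside `μ`: induction on `|ν \ μ|`. -/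

section Matching

variable {σ τ U R : Finset (α × β)}

theorem IsMatching.mono_s5 (hσ : IsMatching σ) (h : τ ⊆ σ) : IsMatching τ :=
  fun e he f hf => hσ e (h he) f (h hf)

theorem IsMatching.mem_of_mem_of_adj (hσ : IsMatching σ) (hR : R ⊆ σ) {e f : α × β}
    (he : e ∈ R) (hf : f ∈ σ) (h : e.1 = f.1 ∨ e.2 = f.2) : f ∈ R :=
  hσ e (hR he) f hf h ▸ he

theorem IsMatching.exists_mem_forall_notMem [DecidableEq α] (hτ : IsMatching τ)
    (h : σ.card < τ.card) : ∃ a b, (a, b) ∈ τ ∧ ∀ y, (a, y) ∉ σ := by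
  have hτfst : (τ.image Prod.fst).card = τ.card :=
    Finset.card_image_of_injOn fun e he f hf h => hτ e he f hf (Or.inl h)
  obtain ⟨a, haτ, haσ⟩ := Finset.exists_mem_notMem_of_card_lt_card
    (s := σ.image Prod.fst) (t := τ.image Prod.fst) (hτfst ▸ Finset.card_image_le.trans_lt h)
  obtain ⟨⟨a, b⟩, hab, rfl⟩ := Finset.mem_image.1 haτ
  exact ⟨a, b, hab, fun y hy => haσ (Finset.mem_image.2 ⟨(a, y), hy, rfl⟩)⟩

variable [DecidableEq α] [DecidableEq β]

theorem IsMatching.symmDiff (hσ : IsMatching σ) (hU : IsMatching (U \ σ))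
    (h : ∀ e ∈ U \ σ, ∀ f ∈ σ, (e.1 = f.1 ∨ e.2 = f.2) → f ∈ U) :
    IsMatching (symmDiff σ U) := by
  have hsep : ∀ e ∈ U \ σ, ∀ f ∈ σ \ U, ¬(e.1 = f.1 ∨ e.2 = f.2) := fun e he f hf hef =>
    (Finset.mem_sdiff.1 hf).2 (h e he f (Finset.mem_sdiff.1 hf).1 hef)
  intro e he f hf hef
  rw [Finset.mem_symmDiff, ← Finset.mem_sdiff, ← Finset.mem_sdiff] at he hf
  rcases he with he | he <;> rcases hf with hf | hf
  · exact hσ e (Finset.mem_sdiff.1 he).1 f (Finset.mem_sdiff.1 hf).1 hef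
  · exact absurd (hef.imp Eq.symm Eq.symm) (hsep f hf e he)
  · exact absurd hef (hsep e he f hf)
  · exact hU e he f hf hef

end Matching

theorem Finset.sum_symmDiff_add_sum_inter {γ M : Type*} [DecidableEq γ] [AddCommMonoid M]
    (s t : Finset γ) (f : γ → M) :
    ∑ x ∈ symmDiff s t, f x + ∑ x ∈ s ∩ t, f x = ∑ x ∈ s, f x + ∑ x ∈ t \ s, f x := by
  rw [symmDiff_def, Finset.sup_eq_union, Finset.sum_union disjoint_sdiff_sdiff, add_right_comm,
    add_comm (∑ x ∈ s \ t, f x), Finset.sum_inter_add_sum_sdiff]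

theorem Finset.card_symmDiff_add_card_inter {γ : Type*} [DecidableEq γ] (s t : Finset γ) :
    (symmDiff s t).card + (s ∩ t).card = s.card + (t \ s).card := by
  simpa only [Finset.card_eq_sum_ones] using Finset.sum_symmDiff_add_sum_inter s t fun _ => 1

namespace List

variable {l₁ : List α} {l₂ : List β}

theorem exists_mem_zip_or_getLast?_left {x : α} (hx : x ∈ l₁) (h : l₁.length ≤ l₂.length + 1) :
    (∃ y, (x, y) ∈ l₁.zip l₂) ∨ (l₂.length < l₁.length ∧ l₁.getLast? = some x) := by
  obtain ⟨i, hi, rfl⟩ := List.getElem_of_mem hx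
  by_cases hi₂ : i < l₂.length
  · exact Or.inl ⟨l₂[i], List.mem_iff_getElem.2 ⟨i, by simp; omega, List.getElem_zip⟩⟩
  · refine Or.inr ⟨by omega, ?_⟩
    rw [List.getLast?_eq_getElem?, List.getElem?_eq_getElem (by omega)]
    congr 2
    omega

theorem exists_mem_zip_or_getLast?_right {y : β} (hy : y ∈ l₂) (h : l₂.length ≤ l₁.length + 1) :
    (∃ x, (x, y) ∈ l₁.zip l₂) ∨ (l₁.length < l₂.length ∧ l₂.getLast? = some y) := by
  refine (exists_mem_zip_or_getLast?_left (l₂ := l₁) hy h).imp (fun ⟨x, hx⟩ => ⟨x, ?_⟩) id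
  rw [← List.zip_swap] at hx
  obtain ⟨⟨x', y'⟩, hp, hpe⟩ := List.mem_map.1 hx
  cases hpe
  exact hp

theorem isMatching_toFinset_zip [DecidableEq α] [DecidableEq β] (h₁ : l₁.Nodup) (h₂ : l₂.Nodup) :
    IsMatching (l₁.zip l₂).toFinset := by
  intro e he f hf hef
  obtain ⟨i, hi, rfl⟩ := List.getElem_of_mem (List.mem_toFinset.1 he)
  obtain ⟨j, hj, rfl⟩ := List.getElem_of_mem (List.mem_toFinset.1 hf)
  simp only [List.getElem_zip] at hef ⊢
  obtain rfl : i = j := by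
    simp only [List.length_zip] at hi hj
    rcases hef with h | h
    · exact (h₁.getElem_inj_iff).1 h
    · exact (h₂.getElem_inj_iff).1 h
  rfl

theorem Nodup.zip_left (h₁ : l₁.Nodup) (h : l₁.length ≤ l₂.length) : (l₁.zip l₂).Nodup :=
  Nodup.of_map Prod.fst (by rwa [List.map_fst_zip h])

theorem Nodup.zip_right (h₂ : l₂.Nodup) (h : l₂.length ≤ l₁.length) : (l₁.zip l₂).Nodup :=
  Nodup.of_map Prod.snd (by rwa [List.map_snd_zip h])

end List

section AlternatingPath

variable [DecidableEq α] [DecidableEq β]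

def fwdEdges (as : List α) (bs : List β) : Finset (α × β) := (as.zip bs).toFinset

def bwdEdges (as : List α) (bs : List β) : Finset (α × β) := (as.tail.zip bs).toFinset

def pathEdges (as : List α) (bs : List β) : Finset (α × β) := fwdEdges as bs ∪ bwdEdges as bs

/-- The path `a₀ b₀ a₁ b₁ …` with `as = [a₀, a₁, …]` and `bs = [b₀, b₁, …]`, whose edges
`(aᵢ, bᵢ)` lie in `τ \ σ` and whose edges `(aᵢ₊₁, bᵢ)` lie in `σ`. -/
structure IsAltPath (σ τ : Finset (α × β)) (as : List α) (bs : List β) : Prop where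
  nodup_left : as.Nodup
  nodup_right : bs.Nodup
  length_right_le : bs.length ≤ as.length
  length_left_le : as.length ≤ bs.length + 1
  fwdEdges_subset : fwdEdges as bs ⊆ τ \ σ
  bwdEdges_subset : bwdEdges as bs ⊆ σ

variable {σ τ : Finset (α × β)} {as : List α} {bs : List β}

theorem fwdEdges_cons_cons (a : α) (b : β) (as : List α) (bs : List β) :
    fwdEdges (a :: as) (b :: bs) = insert (a, b) (fwdEdges as bs) := by
  simp [fwdEdges]

theorem bwdEdges_cons_cons (a a₁ : α) (b : β) (as : List α) (bs : List β) :
    bwdEdges (a :: a₁ :: as) (b :: bs) = insert (a₁, b) (bwdEdges (a₁ :: as) bs) := by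
  simp [bwdEdges]

theorem mem_of_mem_fwdEdges {e : α × β} (he : e ∈ fwdEdges as bs) : e.1 ∈ as ∧ e.2 ∈ bs :=
  List.of_mem_zip (List.mem_toFinset.1 he)

theorem mem_of_mem_bwdEdges {e : α × β} (he : e ∈ bwdEdges as bs) : e.1 ∈ as ∧ e.2 ∈ bs :=
  (List.of_mem_zip (List.mem_toFinset.1 he)).imp_left List.mem_of_mem_tail

namespace IsAltPath

theorem mono_s5 {τ' : Finset (α × β)} (h : IsAltPath σ τ as bs) (hτ : τ ⊆ τ') :
    IsAltPath σ τ' as bs :=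
  { h with fwdEdges_subset := h.fwdEdges_subset.trans (Finset.sdiff_subset_sdiff hτ le_rfl) }

theorem isMatching_fwdEdges (h : IsAltPath σ τ as bs) : IsMatching (fwdEdges as bs) :=
  List.isMatching_toFinset_zip h.nodup_left h.nodup_right

theorem isMatching_bwdEdges (h : IsAltPath σ τ as bs) : IsMatching (bwdEdges as bs) :=
  List.isMatching_toFinset_zip h.nodup_left.tail h.nodup_right

theorem card_fwdEdges (h : IsAltPath σ τ as bs) : (fwdEdges as bs).card = bs.length := by
  rw [fwdEdges, List.toFinset_card_of_nodup (h.nodup_right.zip_right h.length_right_le),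
    List.length_zip, min_eq_right h.length_right_le]

theorem card_bwdEdges (h : IsAltPath σ τ as bs) : (bwdEdges as bs).card = as.length - 1 := by
  have hlen : as.tail.length ≤ bs.length := by simp; have := h.length_left_le; omega
  rw [bwdEdges, List.toFinset_card_of_nodup (h.nodup_left.tail.zip_left hlen),
    List.length_zip, min_eq_left hlen, List.length_tail]

theorem disjoint_fwdEdges_bwdEdges (h : IsAltPath σ τ as bs) :
    Disjoint (fwdEdges as bs) (bwdEdges as bs) :=
  Finset.disjoint_of_subset_left h.fwdEdges_subset
    (Finset.disjoint_of_subset_right h.bwdEdges_subset Finset.sdiff_disjoint)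

theorem pathEdges_subset (h : IsAltPath σ τ as bs) : pathEdges as bs ⊆ σ ∪ τ :=
  Finset.union_subset
    (h.fwdEdges_subset.trans (Finset.sdiff_subset.trans Finset.subset_union_right))
    (h.bwdEdges_subset.trans Finset.subset_union_left)

theorem symmDiff_subset {E ρ : Finset (α × β)} (h : IsAltPath σ τ as bs) (hσ : σ ⊆ E)
    (hτ : τ ⊆ E) (hρ : ρ ⊆ E) : symmDiff ρ (pathEdges as bs) ⊆ E :=
  Finset.symmDiff_subset_union.trans
    (Finset.union_subset hρ (h.pathEdges_subset.trans (Finset.union_subset hσ hτ)))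

theorem exists_mem_bwdEdges (h : IsAltPath σ τ as bs) {x : α} (hx : x ∈ as.tail) :
    ∃ y, (x, y) ∈ bwdEdges as bs := by
  have hlen := h.length_left_le
  obtain ⟨y, hy⟩ | ⟨hlt, -⟩ :=
    List.exists_mem_zip_or_getLast?_left hx (l₂ := bs) (by simp; omega)
  · exact ⟨y, List.mem_toFinset.2 hy⟩
  · simp at hlt; omega

theorem exists_mem_fwdEdges (h : IsAltPath σ τ as bs) {y : β} (hy : y ∈ bs) :
    ∃ x, (x, y) ∈ fwdEdges as bs := by
  have hlen := h.length_right_le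
  obtain ⟨x, hx⟩ | ⟨hlt, -⟩ := List.exists_mem_zip_or_getLast?_right hy (l₁ := as) (by omega)
  · exact ⟨x, List.mem_toFinset.2 hx⟩
  · omega

theorem mem_bwdEdges_of_fst_mem (h : IsAltPath σ τ as bs) (hσ : IsMatching σ)
    (hhead : ∀ a ∈ as.head?, ∀ y, (a, y) ∉ σ) {x : α} {y : β} (hf : (x, y) ∈ σ) (hx : x ∈ as) :
    (x, y) ∈ bwdEdges as bs := by
  cases as with
  | nil => simp at hx
  | cons a as =>
    rcases List.mem_cons.1 hx with rfl | hx
    · exact absurd hf (hhead x rfl y)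
    · obtain ⟨y', hy'⟩ := h.exists_mem_bwdEdges hx
      exact hσ.mem_of_mem_of_adj h.bwdEdges_subset hy' hf (Or.inl rfl)

theorem mem_bwdEdges_of_snd_mem (h : IsAltPath σ τ as bs) (hσ : IsMatching σ)
    (hlast : as.length = bs.length → ∀ b ∈ bs.getLast?, ∀ x, (x, b) ∉ σ)
    {x : α} {y : β} (hf : (x, y) ∈ σ) (hy : y ∈ bs) : (x, y) ∈ bwdEdges as bs := by
  have hlen := h.length_right_le
  obtain ⟨x', hx'⟩ | ⟨hlt, hl⟩ :=
    List.exists_mem_zip_or_getLast?_right hy (l₁ := as.tail) (by simp; omega)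
  · exact hσ.mem_of_mem_of_adj h.bwdEdges_subset (List.mem_toFinset.2 hx') hf (Or.inr rfl)
  · exact absurd hf (hlast (by simp at hlt; omega) y hl x)

theorem mem_fwdEdges_of_fst_mem (h : IsAltPath σ τ as bs) (hτ : IsMatching τ)
    (hlast : as.length = bs.length + 1 → ∀ a ∈ as.getLast?, ∀ y, (a, y) ∉ τ)
    {x : α} {y : β} (hf : (x, y) ∈ τ) (hx : x ∈ as) : (x, y) ∈ fwdEdges as bs := by
  obtain ⟨y', hy'⟩ | ⟨hlt, hl⟩ :=
    List.exists_mem_zip_or_getLast?_left hx (l₂ := bs) h.length_left_le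
  · exact hτ.mem_of_mem_of_adj (h.fwdEdges_subset.trans Finset.sdiff_subset)
      (List.mem_toFinset.2 hy') hf (Or.inl rfl)
  · exact absurd hf (hlast (by have := h.length_left_le; omega) x hl y)

theorem mem_fwdEdges_of_snd_mem (h : IsAltPath σ τ as bs) (hτ : IsMatching τ)
    {x : α} {y : β} (hf : (x, y) ∈ τ) (hy : y ∈ bs) : (x, y) ∈ fwdEdges as bs := by
  obtain ⟨x', hx'⟩ := h.exists_mem_fwdEdges hy
  exact hτ.mem_of_mem_of_adj (h.fwdEdges_subset.trans Finset.sdiff_subset) hx' hf (Or.inr rfl)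

theorem inter_pathEdges_left (h : IsAltPath σ τ as bs) :
    σ ∩ pathEdges as bs = bwdEdges as bs := by
  ext e
  have hfwd : e ∈ fwdEdges as bs → e ∉ σ := fun he => (Finset.mem_sdiff.1 (h.fwdEdges_subset he)).2
  have hbwd : e ∈ bwdEdges as bs → e ∈ σ := fun he => h.bwdEdges_subset he
  simp only [pathEdges, Finset.mem_inter, Finset.mem_union]
  tauto

theorem pathEdges_sdiff_left (h : IsAltPath σ τ as bs) :
    pathEdges as bs \ σ = fwdEdges as bs := by
  ext e
  have hfwd : e ∈ fwdEdges as bs → e ∉ σ := fun he => (Finset.mem_sdiff.1 (h.fwdEdges_subset he)).2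
  have hbwd : e ∈ bwdEdges as bs → e ∈ σ := fun he => h.bwdEdges_subset he
  simp only [pathEdges, Finset.mem_sdiff, Finset.mem_union]
  tauto

theorem isMatching_symmDiff_left (h : IsAltPath σ τ as bs) (hσ : IsMatching σ)
    (hhead : ∀ a ∈ as.head?, ∀ y, (a, y) ∉ σ)
    (hlast : as.length = bs.length → ∀ b ∈ bs.getLast?, ∀ x, (x, b) ∉ σ) :
    IsMatching (symmDiff σ (pathEdges as bs)) := by
  refine hσ.symmDiff (h.pathEdges_sdiff_left ▸ h.isMatching_fwdEdges) ?_
  rw [h.pathEdges_sdiff_left]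
  rintro e he ⟨x, y⟩ hf hef
  obtain ⟨he₁, he₂⟩ := mem_of_mem_fwdEdges he
  refine Finset.mem_union_right _ ?_
  rcases hef with hx | hy
  · exact h.mem_bwdEdges_of_fst_mem hσ hhead hf ((show e.1 = x from hx) ▸ he₁)
  · exact h.mem_bwdEdges_of_snd_mem hσ hlast hf ((show e.2 = y from hy) ▸ he₂)

theorem card_symmDiff_left (h : IsAltPath σ τ as bs) :
    (symmDiff σ (pathEdges as bs)).card + (as.length - 1) = σ.card + bs.length := by
  have := Finset.card_symmDiff_add_card_inter σ (pathEdges as bs)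
  rwa [h.inter_pathEdges_left, h.pathEdges_sdiff_left, h.card_bwdEdges, h.card_fwdEdges] at this

theorem matchingWeight_symmDiff_left (h : IsAltPath σ τ as bs) (w : α × β → ℝ) :
    matchingWeight w (symmDiff σ (pathEdges as bs)) =
      matchingWeight w σ + matchingWeight w (fwdEdges as bs) -
        matchingWeight w (bwdEdges as bs) := by
  have := Finset.sum_symmDiff_add_sum_inter σ (pathEdges as bs) w
  rw [h.inter_pathEdges_left, h.pathEdges_sdiff_left] at this
  simp only [matchingWeight]
  linarith

theorem disjoint_bwdEdges_right (h : IsAltPath σ τ as bs) (hτ : IsMatching τ) :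
    Disjoint (bwdEdges as bs) τ := by
  rw [Finset.disjoint_left]
  rintro ⟨x, y⟩ he heτ
  exact Finset.disjoint_left.1 h.disjoint_fwdEdges_bwdEdges
    (h.mem_fwdEdges_of_snd_mem hτ heτ (mem_of_mem_bwdEdges he).2) he

theorem inter_pathEdges_right (h : IsAltPath σ τ as bs) (hτ : IsMatching τ) :
    τ ∩ pathEdges as bs = fwdEdges as bs := by
  ext e
  have hfwd : e ∈ fwdEdges as bs → e ∈ τ := fun he => (Finset.mem_sdiff.1 (h.fwdEdges_subset he)).1
  have hbwd : e ∈ bwdEdges as bs → e ∉ τ :=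
    fun he => Finset.disjoint_left.1 (h.disjoint_bwdEdges_right hτ) he
  simp only [pathEdges, Finset.mem_inter, Finset.mem_union]
  tauto

theorem pathEdges_sdiff_right (h : IsAltPath σ τ as bs) (hτ : IsMatching τ) :
    pathEdges as bs \ τ = bwdEdges as bs := by
  ext e
  have hfwd : e ∈ fwdEdges as bs → e ∈ τ := fun he => (Finset.mem_sdiff.1 (h.fwdEdges_subset he)).1
  have hbwd : e ∈ bwdEdges as bs → e ∉ τ :=
    fun he => Finset.disjoint_left.1 (h.disjoint_bwdEdges_right hτ) he
  simp only [pathEdges, Finset.mem_sdiff, Finset.mem_union]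
  tauto

theorem isMatching_symmDiff_right (h : IsAltPath σ τ as bs) (hτ : IsMatching τ)
    (hlast : as.length = bs.length + 1 → ∀ a ∈ as.getLast?, ∀ y, (a, y) ∉ τ) :
    IsMatching (symmDiff τ (pathEdges as bs)) := by
  refine hτ.symmDiff ((h.pathEdges_sdiff_right hτ) ▸ h.isMatching_bwdEdges) ?_
  rw [h.pathEdges_sdiff_right hτ]
  rintro e he ⟨x, y⟩ hf hef
  obtain ⟨he₁, he₂⟩ := mem_of_mem_bwdEdges he
  refine Finset.mem_union_left _ ?_
  rcases hef with hx | hy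
  · exact h.mem_fwdEdges_of_fst_mem hτ hlast hf ((show e.1 = x from hx) ▸ he₁)
  · exact h.mem_fwdEdges_of_snd_mem hτ hf ((show e.2 = y from hy) ▸ he₂)

theorem card_symmDiff_right (h : IsAltPath σ τ as bs) (hτ : IsMatching τ) :
    (symmDiff τ (pathEdges as bs)).card + bs.length = τ.card + (as.length - 1) := by
  have := Finset.card_symmDiff_add_card_inter τ (pathEdges as bs)
  rwa [h.inter_pathEdges_right hτ, h.pathEdges_sdiff_right hτ, h.card_bwdEdges,
    h.card_fwdEdges] at this

theorem matchingWeight_symmDiff_right (h : IsAltPath σ τ as bs) (hτ : IsMatching τ)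
    (w : α × β → ℝ) :
    matchingWeight w (symmDiff τ (pathEdges as bs)) =
      matchingWeight w τ - matchingWeight w (fwdEdges as bs) +
        matchingWeight w (bwdEdges as bs) := by
  have := Finset.sum_symmDiff_add_sum_inter τ (pathEdges as bs) w
  rw [h.inter_pathEdges_right hτ, h.pathEdges_sdiff_right hτ] at this
  simp only [matchingWeight]
  linarith

theorem symmDiff_sdiff_ssubset (h : IsAltPath σ τ as bs) (hτ : IsMatching τ) {e : α × β}
    (he : e ∈ fwdEdges as bs) : symmDiff τ (pathEdges as bs) \ σ ⊂ τ \ σ := by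
  have heτ := h.fwdEdges_subset he
  have hpath : e ∈ pathEdges as bs := Finset.mem_union_left _ he
  refine (Finset.ssubset_iff_of_subset fun x hx => ?_).2
    ⟨e, heτ, fun he' => ?_⟩
  · obtain ⟨hx, hxσ⟩ := Finset.mem_sdiff.1 hx
    rcases Finset.mem_symmDiff.1 hx with ⟨hxτ, -⟩ | hx
    · exact Finset.mem_sdiff.2 ⟨hxτ, hxσ⟩
    · rw [← Finset.mem_sdiff, h.pathEdges_sdiff_right hτ] at hx
      exact absurd (h.bwdEdges_subset hx) hxσ
  · rcases Finset.mem_symmDiff.1 (Finset.mem_sdiff.1 he').1 with ⟨-, hnot⟩ | ⟨-, hnot⟩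
    · exact hnot hpath
    · exact hnot (Finset.mem_sdiff.1 heτ).1

theorem cons_cons {a a₁ : α} {b b₁ : β}
    (h : IsAltPath (σ.erase (a₁, b)) (τ.erase (a, b)) (a₁ :: as) (b₁ :: bs))
    (hτ : IsMatching τ) (ha : ∀ y, (a, y) ∉ σ) (hab : (a, b) ∈ τ) (ha₁b : (a₁, b) ∈ σ) :
    IsAltPath σ τ (a :: a₁ :: as) (b :: b₁ :: bs) := by
  have hbwd := h.bwdEdges_subset.trans (Finset.erase_subset _ _)
  have ha_notMem : a ∉ a₁ :: as := by
    rintro (_ | ⟨_, hmem⟩)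
    · exact ha b ha₁b
    · obtain ⟨y, hy⟩ := h.exists_mem_bwdEdges hmem
      exact ha y (hbwd hy)
  have hb_notMem : b ∉ b₁ :: bs := by
    intro hmem
    obtain ⟨x, hx⟩ := h.exists_mem_fwdEdges hmem
    obtain ⟨hne, hxτ⟩ := Finset.mem_erase.1 (Finset.mem_sdiff.1 (h.fwdEdges_subset hx)).1
    exact hne (hτ _ hxτ _ hab (Or.inr rfl))
  refine ⟨List.nodup_cons.2 ⟨ha_notMem, h.nodup_left⟩, List.nodup_cons.2 ⟨hb_notMem, h.nodup_right⟩,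
    by simpa using h.length_right_le, by simpa using h.length_left_le, ?_, ?_⟩
  · rw [fwdEdges_cons_cons]
    refine Finset.insert_subset (Finset.mem_sdiff.2 ⟨hab, ha b⟩) fun e he => ?_
    obtain ⟨heτ, heσ⟩ := Finset.mem_sdiff.1 (h.fwdEdges_subset he)
    refine Finset.mem_sdiff.2 ⟨Finset.mem_of_mem_erase heτ, fun heσ' => heσ ?_⟩
    refine Finset.mem_erase.2 ⟨?_, heσ'⟩
    rintro rfl
    exact hb_notMem (mem_of_mem_fwdEdges he).2
  · rw [bwdEdges_cons_cons]
    exact Finset.insert_subset ha₁b hbwd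

end IsAltPath

theorem exists_isAltPath {μ ν : Finset (α × β)} (hμ : IsMatching μ) (hν : IsMatching ν) {a : α}
    {b : β} (hab : (a, b) ∈ ν) (ha : ∀ y, (a, y) ∉ μ) :
    ∃ as bs, IsAltPath μ ν (a :: as) (b :: bs) ∧
      ((as.length = bs.length ∧ ∀ b' ∈ (b :: bs).getLast?, ∀ x, (x, b') ∉ μ) ∨
        (as.length = bs.length + 1 ∧ ∀ a' ∈ (a :: as).getLast?, ∀ y, (a', y) ∉ ν)) := by
  by_cases hb : ∀ a₁, (a₁, b) ∉ μ
  · refine ⟨[], [], ⟨by simp, by simp, le_rfl, by simp, ?_, by simp [bwdEdges]⟩, Or.inl ⟨rfl, ?_⟩⟩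
    · simp [fwdEdges, hab, ha]
    · simpa using hb
  obtain ⟨a₁, ha₁⟩ := not_forall_not.1 hb
  have hne : a₁ ≠ a := fun h => ha b (h ▸ ha₁)
  by_cases hb₁ : ∀ b₁, (a₁, b₁) ∉ ν
  · refine ⟨[a₁], [], ⟨by simp [hne.symm], by simp, by simp, le_rfl, ?_, ?_⟩, Or.inr ⟨rfl, ?_⟩⟩
    · simp [fwdEdges, hab, ha]
    · simp [bwdEdges, ha₁]
    · simpa using hb₁
  obtain ⟨b₁, hb₁⟩ := not_forall_not.1 hb₁
  have hb₁' : (a₁, b₁) ∈ ν.erase (a, b) :=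
    Finset.mem_erase.2 ⟨fun h => hne (congrArg Prod.fst h), hb₁⟩
  have ha₁' : ∀ y, (a₁, y) ∉ μ.erase (a₁, b) := fun y hy =>
    (Finset.mem_erase.1 hy).1 (hμ _ (Finset.mem_erase.1 hy).2 _ ha₁ (Or.inl rfl))
  -- Erasing `(a₁, b)` from `μ` and `(a, b)` from `ν` leaves `a₁` free, in a smaller instance.
  obtain ⟨as, bs, hp, hend⟩ := exists_isAltPath (hμ.mono_s5 (Finset.erase_subset _ _))
    (hν.mono_s5 (Finset.erase_subset _ _)) hb₁' ha₁'
  have hp' := hp.cons_cons hν ha hab ha₁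
  refine ⟨a₁ :: as, b₁ :: bs, hp', ?_⟩
  rcases hend with ⟨hlen, hlast⟩ | ⟨hlen, hlast⟩
  · refine Or.inl ⟨by simp [hlen], fun b' hb' x hxb' => ?_⟩
    rw [List.getLast?_cons_cons] at hb'
    refine hlast b' hb' x (Finset.mem_erase.2 ⟨fun heq => ?_, hxb'⟩)
    have hb'b : b' = b := congrArg Prod.snd heq
    exact (List.nodup_cons.1 hp'.nodup_right).1 (hb'b ▸ List.mem_of_getLast? hb')
  · refine Or.inr ⟨by simp [hlen], fun a' ha' y hya' => ?_⟩
    rw [List.getLast?_cons_cons] at ha'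
    refine hlast a' ha' y (Finset.mem_erase.2 ⟨fun heq => ?_, hya'⟩)
    have ha'a : a' = a := congrArg Prod.fst heq
    exact (List.nodup_cons.1 hp'.nodup_left).1 (ha'a ▸ List.mem_of_getLast? ha')
termination_by ν.card
decreasing_by exact Finset.card_erase_lt_of_mem hab

end AlternatingPath

section Interleave

def interleave : List α → List β → List (α ⊕ β)
  | a :: as, b :: bs => Sum.inl a :: Sum.inr b :: interleave as bs
  | _, _ => []

theorem interleave_perm : ∀ {as : List α} {bs : List β}, as.length = bs.length →
    (interleave as bs).Perm (as.map Sum.inl ++ bs.map Sum.inr)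
  | [], [], _ => by simp [interleave]
  | a :: as, b :: bs, h => by
    simp only [interleave, List.map_cons, List.cons_append]
    exact (((interleave_perm (by simpa using h)).cons _).trans List.perm_middle.symm).cons _
  | [], _ :: _, h | _ :: _, [], h => by simp at h

theorem nodup_interleave {as : List α} {bs : List β} (h : as.length = bs.length) :
    (interleave as bs).Nodup ↔ as.Nodup ∧ bs.Nodup := by
  rw [(interleave_perm h).nodup_iff, List.nodup_append, List.nodup_map_iff Sum.inl_injective,
    List.nodup_map_iff Sum.inr_injective]
  simp

theorem head?_interleave : ∀ {as : List α} {bs : List β}, as.length = bs.length →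
    (interleave as bs).head? = as.head?.map Sum.inl
  | [], [], _ | _ :: _, _ :: _, _ => rfl
  | [], _ :: _, h | _ :: _, [], h => by simp at h

theorem getLast?_interleave : ∀ {as : List α} {bs : List β}, as.length = bs.length →
    (interleave as bs).getLast? = bs.getLast?.map Sum.inr
  | [], [], _ | [_], [_], _ => rfl
  | a :: a' :: as, b :: b' :: bs, h => by
    have ih := getLast?_interleave (as := a' :: as) (bs := b' :: bs) (by simpa using h)
    simp only [interleave] at ih ⊢
    rw [List.getLast?_cons_cons, List.getLast?_cons_cons, ih, List.getLast?_cons_cons]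
  | [], _ :: _, h | _ :: _, [], h | [_], _ :: _ :: _, h | _ :: _ :: _, [_], h => by simp at h

theorem isChain_interleave (R : α ⊕ β → α ⊕ β → Prop) :
    ∀ {as : List α} {bs : List β}, as.length = bs.length →
      ((interleave as bs).IsChain R ↔ (∀ e ∈ as.zip bs, R (Sum.inl e.1) (Sum.inr e.2)) ∧
        ∀ e ∈ as.tail.zip bs, R (Sum.inr e.2) (Sum.inl e.1))
  | [], [], _ | [_], [_], _ => by simp [interleave]
  | a :: a' :: as, b :: b' :: bs, h => by
    have ih := isChain_interleave R (as := a' :: as) (bs := b' :: bs) (by simpa using h)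
    simp only [interleave] at ih ⊢
    rw [List.isChain_cons_cons, List.isChain_cons_cons, ih]
    simp only [List.forall_mem_cons, List.zip_cons_cons, List.tail_cons]
    tauto
  | [], _ :: _, h | _ :: _, [], h | [_], _ :: _ :: _, h | _ :: _ :: _, [_], h => by simp at h

theorem perm_filterMap_undEdge_interleave : ∀ {as : List α} {bs : List β},
    as.length = bs.length →
      (((interleave as bs).zip (interleave as bs).tail).filterMap undEdge).Perm
        (as.zip bs ++ as.tail.zip bs)
  | [], [], _ | [_], [_], _ => by simp [interleave, undEdge]
  | a :: a' :: as, b :: b' :: bs, h => by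
    have ih := perm_filterMap_undEdge_interleave (as := a' :: as) (bs := b' :: bs)
      (by simpa using h)
    simp only [interleave, List.tail_cons, List.zip_cons_cons, List.filterMap_cons, undEdge,
      List.cons_append] at ih ⊢
    exact ((ih.cons _).trans ((List.Perm.swap _ _ _).trans (List.perm_middle.symm.cons _))).cons _
  | [], _ :: _, h | _ :: _, [], h | [_], _ :: _ :: _, h | _ :: _ :: _, [_], h => by simp at h

theorem usedEdges_interleave [DecidableEq α] [DecidableEq β] {as : List α} {bs : List β}
    (h : as.length = bs.length) : usedEdges (interleave as bs) = pathEdges as bs := by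
  rw [usedEdges, List.toFinset_eq_of_perm _ _ (perm_filterMap_undEdge_interleave h),
    List.toFinset_append]
  rfl

theorem walkWeight_interleave (w : α × β → ℝ) : ∀ {as : List α} {bs : List β},
    as.length = bs.length →
      walkWeight (auxW w) (interleave as bs) =
        ((as.zip bs).map w).sum - ((as.tail.zip bs).map w).sum
  | [], [], _ | [_], [_], _ => by simp [interleave, walkWeight, auxW]
  | a :: a' :: as, b :: b' :: bs, h => by
    have ih := walkWeight_interleave w (as := a' :: as) (bs := b' :: bs) (by simpa using h)
    simp only [walkWeight, interleave, List.tail_cons, List.zip_cons_cons, List.map_cons,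
      List.sum_cons, auxW] at ih ⊢
    linarith
  | [], _ :: _, h | _ :: _, [], h | [_], _ :: _ :: _, h | _ :: _ :: _, [_], h => by simp at h

theorem exists_eq_interleave {E μ : Finset (α × β)} : ∀ {l : List (α ⊕ β)},
    l.IsChain (auxAdj E μ) → (∀ x ∈ l.head?, x.isLeft) → (∀ x ∈ l.getLast?, x.isRight) →
      ∃ as bs, as.length = bs.length ∧ l = interleave as bs
  | [], _, _, _ => ⟨[], [], rfl, rfl⟩
  | [Sum.inl _], _, _, hl => by simp at hl
  | Sum.inr _ :: _, _, hh, _ => by simp at hh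
  | Sum.inl _ :: Sum.inl _ :: _, hc, _, _ => by simp [auxAdj] at hc
  | Sum.inl a :: Sum.inr b :: l, hc, _, hl => by
    have hhead : ∀ x ∈ l.head?, x.isLeft := by
      rintro (x | x) hx
      · rfl
      · cases l with
        | nil => simp at hx
        | cons y l =>
          obtain rfl : y = Sum.inr x := by simpa using hx
          simp [auxAdj] at hc
    have hlast : ∀ x ∈ l.getLast?, x.isRight := by
      cases l with
      | nil => simp
      | cons y l => rwa [List.getLast?_cons_cons, List.getLast?_cons_cons] at hl
    obtain ⟨as, bs, hlen, rfl⟩ := exists_eq_interleave hc.tail.tail hhead hlast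
    exact ⟨a :: as, b :: bs, by simp [hlen], rfl⟩

theorem isDiPath_interleave_iff [DecidableEq α] [DecidableEq β] {F σ : Finset (α × β)}
    {as : List α} {bs : List β} {a : α} {b : β} (h : as.length = bs.length) :
    IsDiPath (auxAdj F σ) (Sum.inl a) (Sum.inr b) (interleave as bs) ↔
      IsAltPath σ F as bs ∧ as.head? = some a ∧ bs.getLast? = some b := by
  change _ ∧ _ ∧ List.IsChain _ _ ∧ _ ↔ _
  rw [head?_interleave h, getLast?_interleave h, isChain_interleave _ h, nodup_interleave h]
  constructor
  · rintro ⟨hhead, hlast, ⟨hfwd, hbwd⟩, has, hbs⟩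
    refine ⟨⟨has, hbs, h.ge, by omega, fun e he => ?_, fun e he => hbwd e (List.mem_toFinset.1 he)⟩,
      by simpa using hhead, by simpa using hlast⟩
    exact Finset.mem_sdiff.2 (hfwd e (List.mem_toFinset.1 he))
  · rintro ⟨hp, hhead, hlast⟩
    exact ⟨by simp [hhead], by simp [hlast],
      ⟨fun e he => Finset.mem_sdiff.1 (hp.fwdEdges_subset (List.mem_toFinset.2 he)),
        fun e he => hp.bwdEdges_subset (List.mem_toFinset.2 he)⟩, hp.nodup_left, hp.nodup_right⟩

theorem IsAltPath.walkWeight_interleave [DecidableEq α] [DecidableEq β] {σ τ : Finset (α × β)}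
    {as : List α} {bs : List β} (h : IsAltPath σ τ as bs) (hlen : as.length = bs.length)
    (w : α × β → ℝ) :
    walkWeight (auxW w) (interleave as bs) =
      matchingWeight w (fwdEdges as bs) - matchingWeight w (bwdEdges as bs) := by
  rw [_root_.walkWeight_interleave w hlen, matchingWeight, matchingWeight, fwdEdges, bwdEdges,
    List.sum_toFinset _ (h.nodup_right.zip_right h.length_right_le),
    List.sum_toFinset _ (h.nodup_left.tail.zip_left (by simp; omega))]

end Interleave

section Optimality

variable [DecidableEq α] [DecidableEq β] {E μ : Finset (α × β)} {w : α × β → ℝ} {d : ℝ}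

theorem matchingWeight_add_le_of_isAltPath {as : List α} {bs : List β} {a : α} {b : β}
    (hμE : μ ⊆ E)
    (hmin : ∀ ν ⊆ E, IsMatching ν → ν.card = μ.card → matchingWeight w μ ≤ matchingWeight w ν)
    (hd : ∀ (u : α) (v : β) (Q : List (α ⊕ β)), (∀ y, (u, y) ∉ μ) → (∀ x, (x, v) ∉ μ) →
      IsDiPath (auxAdj E μ) (Sum.inl u) (Sum.inr v) Q → d ≤ walkWeight (auxW w) Q)
    {ν : Finset (α × β)} (hνE : ν ⊆ E) (hν : IsMatching ν) (hνc : ν.card = μ.card + 1)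
    (hp : IsAltPath μ ν (a :: as) (b :: bs)) (ha : ∀ y, (a, y) ∉ μ)
    (hlen : as.length = bs.length) (hlast : ∀ b' ∈ (b :: bs).getLast?, ∀ x, (x, b') ∉ μ) :
    matchingWeight w μ + d ≤ matchingWeight w ν := by
  have hlen' : (a :: as).length = (b :: bs).length := by simp [hlen]
  have hv := List.getLast?_eq_some_getLast (List.cons_ne_nil b bs)
  have hQ := hd a _ _ ha (hlast _ hv) ((isDiPath_interleave_iff hlen').2 ⟨hp.mono_s5 hνE, rfl, hv⟩)
  have hν' := hmin _ (hp.symmDiff_subset hμE hνE hνE)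
    (hp.isMatching_symmDiff_right hν fun h => absurd h (by simp [hlen]))
    (by have := hp.card_symmDiff_right hν; simp at this; omega)
  rw [hp.walkWeight_interleave hlen' w] at hQ
  rw [hp.matchingWeight_symmDiff_right hν w] at hν'
  linarith

theorem matchingWeight_add_le_of_card_eq_succ (hμE : μ ⊆ E) (hμ : IsMatching μ)
    (hmin : ∀ ν ⊆ E, IsMatching ν → ν.card = μ.card → matchingWeight w μ ≤ matchingWeight w ν)
    (hd : ∀ (u : α) (v : β) (Q : List (α ⊕ β)), (∀ y, (u, y) ∉ μ) → (∀ x, (x, v) ∉ μ) →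
      IsDiPath (auxAdj E μ) (Sum.inl u) (Sum.inr v) Q → d ≤ walkWeight (auxW w) Q)
    {ν : Finset (α × β)} (hνE : ν ⊆ E) (hν : IsMatching ν) (hνc : ν.card = μ.card + 1) :
    matchingWeight w μ + d ≤ matchingWeight w ν := by
  obtain ⟨a, b, hab, ha⟩ := hν.exists_mem_forall_notMem (σ := μ) (by omega)
  obtain ⟨as, bs, hp, ⟨hlen, hlast⟩ | ⟨hlen, hlast⟩⟩ := exists_isAltPath hμ hν hab ha
  · exact matchingWeight_add_le_of_isAltPath hμE hmin hd hνE hν hνc hp ha hlen hlast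
  have hμ' := hmin _ (hp.symmDiff_subset hμE hνE hμE)
    (hp.isMatching_symmDiff_left hμ (by simpa using ha) fun h => absurd h (by simp [hlen]))
    (by have := hp.card_symmDiff_left; simp at this; omega)
  have hdec := hp.symmDiff_sdiff_ssubset hν (e := (a, b)) (by simp [fwdEdges])
  have hν' := matchingWeight_add_le_of_card_eq_succ hμE hμ hmin hd
    (hp.symmDiff_subset hμE hνE hνE) (hp.isMatching_symmDiff_right hν fun _ => hlast)
    (by have := hp.card_symmDiff_right hν; simp at this; omega)
  rw [hp.matchingWeight_symmDiff_left w] at hμ'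
  rw [hp.matchingWeight_symmDiff_right hν w] at hν'
  linarith
termination_by (ν \ μ).card
decreasing_by exact Finset.card_lt_card hdec

end Optimality

theorem augment_along_shortest_augmenting_path_general
    [DecidableEq α] [DecidableEq β]
    (E μ : Finset (α × β)) (w : α × β → ℝ) (k : ℕ) (u : α) (v : β) (P : List (α ⊕ β))
    (hμE : μ ⊆ E) (hμ : IsMatching μ) (hcard : μ.card = k)
    (hmin : ∀ ν ⊆ E, IsMatching ν → ν.card = k → matchingWeight w μ ≤ matchingWeight w ν)
    (hu : ∀ y : β, (u, y) ∉ μ) (hv : ∀ x : α, (x, v) ∉ μ)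
    (hP : IsDiPath (auxAdj E μ) (Sum.inl u) (Sum.inr v) P)
    (hPmin : ∀ (u' : α) (v' : β) (Q : List (α ⊕ β)),
      (∀ y : β, (u', y) ∉ μ) → (∀ x : α, (x, v') ∉ μ) →
      IsDiPath (auxAdj E μ) (Sum.inl u') (Sum.inr v') Q →
      walkWeight (auxW w) P ≤ walkWeight (auxW w) Q) :
    symmDiff μ (usedEdges P) ⊆ E ∧ IsMatching (symmDiff μ (usedEdges P)) ∧
      (symmDiff μ (usedEdges P)).card = k + 1 ∧
      ∀ ν ⊆ E, IsMatching ν → ν.card = k + 1 →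
        matchingWeight w (symmDiff μ (usedEdges P)) ≤ matchingWeight w ν := by
  subst hcard
  obtain ⟨as, bs, hlen, rfl⟩ :=
    exists_eq_interleave hP.2.2.1 (by simp [hP.1]) (by simp [hP.2.1])
  obtain ⟨hp, hhead, hlast⟩ := (isDiPath_interleave_iff hlen).1 hP
  have hbs : bs ≠ [] := by rintro rfl; simp at hlast
  rw [usedEdges_interleave hlen]
  refine ⟨hp.symmDiff_subset hμE subset_rfl hμE,
    hp.isMatching_symmDiff_left hμ (by simpa [hhead] using hu) fun _ => by simpa [hlast] using hv,
    by have := hp.card_symmDiff_left; have := List.length_pos_of_ne_nil hbs; omega,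
    fun ν hνE hν hνc => ?_⟩
  have hopt := matchingWeight_add_le_of_card_eq_succ hμE hμ hmin hPmin hνE hν hνc
  rw [hp.walkWeight_interleave hlen w] at hopt
  linarith [hp.matchingWeight_symmDiff_left w]

/-- If `μ` is a matching of size `k` of minimum weight among all matchings of
size `k` in `G`, and `P` is a shortest augmenting path in `(G_μ, w_μ)` (a directed path from an
unmatched vertex of `V⁺` to an unmatched vertex of `V⁻`, of minimum auxiliary weight among all
augmenting paths), then `μ △ P` is a matching of size `k + 1` of minimum weight among all
matchings of size `k + 1` in `G`. -/
theorem augment_along_shortest_augmenting_path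
    [Fintype α] [Fintype β] [DecidableEq α] [DecidableEq β]
    (E μ : Finset (α × β)) (w : α × β → ℝ) (k : ℕ) (u : α) (v : β) (P : List (α ⊕ β))
    (hμE : μ ⊆ E) (hμ : IsMatching μ) (hcard : μ.card = k)
    (hmin : ∀ ν ⊆ E, IsMatching ν → ν.card = k → matchingWeight w μ ≤ matchingWeight w ν)
    (hu : ∀ y : β, (u, y) ∉ μ) (hv : ∀ x : α, (x, v) ∉ μ)
    (hP : IsDiPath (auxAdj E μ) (Sum.inl u) (Sum.inr v) P)
    (hPmin : ∀ (u' : α) (v' : β) (Q : List (α ⊕ β)),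
      (∀ y : β, (u', y) ∉ μ) → (∀ x : α, (x, v') ∉ μ) →
      IsDiPath (auxAdj E μ) (Sum.inl u') (Sum.inr v') Q →
      walkWeight (auxW w) P ≤ walkWeight (auxW w) Q) :
    symmDiff μ (usedEdges P) ⊆ E ∧ IsMatching (symmDiff μ (usedEdges P)) ∧
      (symmDiff μ (usedEdges P)).card = k + 1 ∧
      ∀ ν ⊆ E, IsMatching ν → ν.card = k + 1 →
        matchingWeight w (symmDiff μ (usedEdges P)) ≤ matchingWeight w ν :=
  augment_along_shortest_augmenting_path_general E μ w k u v P hμE hμ hcard hmin hu hv hP hPmin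
end
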